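/- arXiv:2510.03164 — 10 statements merged into one kernel-verified Lean document; each statement's English description precedes it below -/
import Mathlib

section
/- The class of (H0,H1)-smooth functions is closed under affine transformations: if g: ℝ^q → ℝ is (H0^g, H1^g)-smooth with infimum g*, A ∈ ℝ^{q×p} is any matrix, b ∈ ℝ^q any vector, and f(w) := g(Aw + b) has infimum f*, then f is (H0^f, H1^f)-smooth with H0^f = ‖A‖²(H0^g + H1^g(f* − g*)) and H1^f = ‖A‖²·H1^g, where ‖A‖ is the operator norm. In particular f* ≥ g*. -/
/-
Write `f = g ∘ φ` with the affine map `φ w = A w + b`. Translation does not change iterated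
derivatives, and composing on the right with `A` turns the second derivative into
`D²g(φ w)(A ·, A ·)`, whose norm is at most `‖A‖² ‖D²g(φ w)‖`. Plugging in the `(H0, H1)`-bound
for `g` and splitting `g(φ w) - g* = (g(φ w) - f*) + (f* - g*)` gives the constants. Since every
value of `f` is a value of `g`, the infimum of `f` dominates that of `g`.
-/

theorem ContinuousLinearMap.norm_iteratedFDeriv_comp_right_le {𝕜 E F G : Type*}
    [NontriviallyNormedField 𝕜] [NormedAddCommGroup E] [NormedSpace 𝕜 E]
    [NormedAddCommGroup F] [NormedSpace 𝕜 F] [NormedAddCommGroup G] [NormedSpace 𝕜 G]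
    {n : WithTop ℕ∞} (A : G →L[𝕜] E) {f : E → F} (hf : ContDiff 𝕜 n f) (x : G) {i : ℕ}
    (hi : i ≤ n) :
    ‖iteratedFDeriv 𝕜 i (f ∘ A) x‖ ≤ ‖iteratedFDeriv 𝕜 i f (A x)‖ * ‖A‖ ^ i := by
  rw [A.iteratedFDeriv_comp_right hf x hi]
  simpa using (iteratedFDeriv 𝕜 i f (A x)).norm_compContinuousLinearMap_le fun _ => A

theorem norm_iteratedFDeriv_comp_affine_le {𝕜 E F G : Type*}
    [NontriviallyNormedField 𝕜] [NormedAddCommGroup E] [NormedSpace 𝕜 E]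
    [NormedAddCommGroup F] [NormedSpace 𝕜 F] [NormedAddCommGroup G] [NormedSpace 𝕜 G]
    {n : WithTop ℕ∞} (A : G →L[𝕜] E) (b : E) {f : E → F} (hf : ContDiff 𝕜 n f) (x : G)
    {i : ℕ} (hi : i ≤ n) :
    ‖iteratedFDeriv 𝕜 i (fun w => f (A w + b)) x‖ ≤
      ‖iteratedFDeriv 𝕜 i f (A x + b)‖ * ‖A‖ ^ i := by
  have hshift : ContDiff 𝕜 n fun y => f (y + b) := hf.comp (contDiff_id.add contDiff_const)
  have := A.norm_iteratedFDeriv_comp_right_le hshift x hi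
  rwa [iteratedFDeriv_comp_add_right] at this

theorem IsGLB.le_of_range_comp {α β γ : Type*} [Preorder γ] {g : β → γ} {φ : α → β}
    {a c : γ} (hg : IsGLB (Set.range g) a) (hgφ : IsGLB (Set.range (g ∘ φ)) c) : a ≤ c :=
  hgφ.2 <| by
    rintro _ ⟨w, rfl⟩
    exact hg.1 ⟨φ w, rfl⟩

theorem stmt_1_general {p q : ℕ} (g : EuclideanSpace ℝ (Fin q) → ℝ)
    (H0g H1g gstar fstar : ℝ)
    (A : EuclideanSpace ℝ (Fin p) →L[ℝ] EuclideanSpace ℝ (Fin q))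
    (b : EuclideanSpace ℝ (Fin q))
    (hg : ContDiff ℝ 2 g)
    (hgstar : IsGLB (Set.range g) gstar)
    (hfstar : IsGLB (Set.range fun w => g (A w + b)) fstar)
    (hsg : ∀ y, ‖iteratedFDeriv ℝ 2 g y‖ ≤ H0g + H1g * (g y - gstar)) :
    (∀ w, ‖iteratedFDeriv ℝ 2 (fun w => g (A w + b)) w‖ ≤
        ‖A‖ ^ 2 * (H0g + H1g * (fstar - gstar))
          + (‖A‖ ^ 2 * H1g) * (g (A w + b) - fstar)) ∧
    gstar ≤ fstar := by
  refine ⟨fun w => ?_, hgstar.le_of_range_comp hfstar⟩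
  calc ‖iteratedFDeriv ℝ 2 (fun w => g (A w + b)) w‖
      ≤ ‖iteratedFDeriv ℝ 2 g (A w + b)‖ * ‖A‖ ^ 2 :=
        norm_iteratedFDeriv_comp_affine_le A b hg w le_rfl
    _ ≤ (H0g + H1g * (g (A w + b) - gstar)) * ‖A‖ ^ 2 := by gcongr; exact hsg _
    _ = ‖A‖ ^ 2 * (H0g + H1g * (fstar - gstar))
          + (‖A‖ ^ 2 * H1g) * (g (A w + b) - fstar) := by ring

/-- The class of `(H0,H1)`-smooth functions is closed under affine transformations. -/
theorem stmt_1 {p q : ℕ} (g : EuclideanSpace ℝ (Fin q) → ℝ)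
    (H0g H1g gstar fstar : ℝ)
    (A : EuclideanSpace ℝ (Fin p) →L[ℝ] EuclideanSpace ℝ (Fin q))
    (b : EuclideanSpace ℝ (Fin q))
    (hH0g : 0 ≤ H0g) (hH1g : 0 ≤ H1g)
    (hg : ContDiff ℝ 2 g)
    (hgstar : IsGLB (Set.range g) gstar)
    (hfstar : IsGLB (Set.range fun w => g (A w + b)) fstar)
    (hsg : ∀ y, ‖iteratedFDeriv ℝ 2 g y‖ ≤ H0g + H1g * (g y - gstar)) :
    (∀ w, ‖iteratedFDeriv ℝ 2 (fun w => g (A w + b)) w‖ ≤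
        ‖A‖ ^ 2 * (H0g + H1g * (fstar - gstar))
          + (‖A‖ ^ 2 * H1g) * (g (A w + b) - fstar)) ∧
    gstar ≤ fstar :=
  stmt_1_general g H0g H1g gstar fstar A b hg hgstar hfstar hsg
end

section
/- Every (L0, L1)-smooth function bounded below is (H0, H1)-smooth: if f: ℝ^d → ℝ is twice continuously differentiable with f* > −∞ and satisfies ‖∇²f(w)‖ ≤ L0 + L1‖∇f(w)‖ for all w, together with the auxiliary bound ‖∇f(w)‖² ≤ (2/ν)(L0 + L1‖∇f(w)‖)(f(w) − f*) where ν satisfies ν = e^{−ν}, then ‖∇²f(w)‖ ≤ H0 + H1(f(w) − f*) holds with H0 = L0 + L0·L1/ν and H1 = (4L1² + νL1)/(2ν). -/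
/-!
Writing `g = ‖∇f(w)‖` and `Δ = f(w) - f*`, the auxiliary bound is a quadratic inequality
`(ν g)² ≤ 2 (L1 Δ) (ν g) + 4 L0 (ν Δ / 2)` in `ν g`. Solving it and bounding the square root
by AM-GM gives the linear bound `ν g ≤ L0 + 2 L1 Δ + ν Δ / 2`, which is substituted into the
`(L0,L1)`-smoothness inequality.
-/

lemma le_two_mul_add_add_of_sq_le {a b c x : ℝ} (ha : 0 ≤ a) (hbc : 0 ≤ b + c)
    (h : x ^ 2 ≤ 2 * a * x + 4 * b * c) : x ≤ 2 * a + b + c := by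
  by_contra! hx
  have hamgm : 4 * b * c ≤ (b + c) ^ 2 := by nlinarith [sq_nonneg (b - c)]
  have hprod : (2 * a + b + c) * (b + c) < x * (x - 2 * a) :=
    mul_lt_mul'' hx (by linarith) (by linarith) hbc
  nlinarith

lemma mul_le_of_sq_le_mul_mul {L0 L1 ν g Δ : ℝ} (hL0 : 0 ≤ L0) (hL1 : 0 ≤ L1) (hν : 0 < ν)
    (hΔ : 0 ≤ Δ) (h : g ^ 2 ≤ (2 / ν) * (L0 + L1 * g) * Δ) :
    ν * g ≤ L0 + 2 * L1 * Δ + ν * Δ / 2 := by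
  have hquad : (ν * g) ^ 2 ≤ 2 * (L1 * Δ) * (ν * g) + 4 * L0 * (ν * Δ / 2) := by
    calc (ν * g) ^ 2 = ν ^ 2 * g ^ 2 := by ring
      _ ≤ ν ^ 2 * ((2 / ν) * (L0 + L1 * g) * Δ) := by gcongr
      _ = 2 * (L1 * Δ) * (ν * g) + 4 * L0 * (ν * Δ / 2) := by field_simp; ring
  linarith [le_two_mul_add_add_of_sq_le (by positivity) (by positivity) hquad]

theorem stmt_2_general {d : ℕ} (f : EuclideanSpace ℝ (Fin d) → ℝ)
    (L0 L1 ν fstar : ℝ) (hL0 : 0 ≤ L0) (hL1 : 0 ≤ L1)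
    (hν : ν = Real.exp (-ν))
    (hfstar : IsGLB (Set.range f) fstar)
    (hL : ∀ w, ‖iteratedFDeriv ℝ 2 f w‖ ≤ L0 + L1 * ‖gradient f w‖)
    (haux : ∀ w, ‖gradient f w‖ ^ 2 ≤
        (2 / ν) * (L0 + L1 * ‖gradient f w‖) * (f w - fstar)) :
    ∀ w, ‖iteratedFDeriv ℝ 2 f w‖ ≤
        (L0 + L0 * L1 / ν) + ((4 * L1 ^ 2 + ν * L1) / (2 * ν)) * (f w - fstar) := by
  intro w
  have hν0 : 0 < ν := hν ▸ Real.exp_pos _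
  have hΔ : 0 ≤ f w - fstar := sub_nonneg.mpr (hfstar.1 (Set.mem_range_self w))
  have hgrad : ‖gradient f w‖ ≤ (L0 + 2 * L1 * (f w - fstar) + ν * (f w - fstar) / 2) / ν := by
    rw [le_div_iff₀ hν0, mul_comm]
    exact mul_le_of_sq_le_mul_mul hL0 hL1 hν0 hΔ (haux w)
  calc ‖iteratedFDeriv ℝ 2 f w‖
      ≤ L0 + L1 * ‖gradient f w‖ := hL w
    _ ≤ L0 + L1 * ((L0 + 2 * L1 * (f w - fstar) + ν * (f w - fstar) / 2) / ν) := by gcongr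
    _ = (L0 + L0 * L1 / ν) + ((4 * L1 ^ 2 + ν * L1) / (2 * ν)) * (f w - fstar) := by
      field_simp; ring

/-- Every `(L0,L1)`-smooth function bounded below is `(H0,H1)`-smooth. -/
theorem stmt_2 {d : ℕ} (f : EuclideanSpace ℝ (Fin d) → ℝ)
    (L0 L1 ν fstar : ℝ) (hL0 : 0 ≤ L0) (hL1 : 0 ≤ L1)
    (hν : ν = Real.exp (-ν))
    (hf : ContDiff ℝ 2 f)
    (hfstar : IsGLB (Set.range f) fstar)
    (hL : ∀ w, ‖iteratedFDeriv ℝ 2 f w‖ ≤ L0 + L1 * ‖gradient f w‖)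
    (haux : ∀ w, ‖gradient f w‖ ^ 2 ≤
        (2 / ν) * (L0 + L1 * ‖gradient f w‖) * (f w - fstar)) :
    ∀ w, ‖iteratedFDeriv ℝ 2 f w‖ ≤
        (L0 + L0 * L1 / ν) + ((4 * L1 ^ 2 + ν * L1) / (2 * ν)) * (f w - fstar) :=
  stmt_2_general f L0 L1 ν fstar hL0 hL1 hν hfstar hL haux
end

section
/- The class of (L0, L1)-smooth functions of one variable is not closed under summation: the functions f1(w) = ∫₀^w (u + sin(u²)) du and f2(w) = ∫₀^w (−v + sin(v²)) dv each satisfy |f''(w)| ≤ 3 + 3|f'(w)| for all w ∈ ℝ, but their sum f(w) = 2 sin(w²) admits no constants L0, L1 ≥ 0 with |f''(w)| ≤ L0 + L1|f'(w)| for all w. -/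
/-!
Both derivatives `f₁' = w + sin(w²)` and `f₂' = -w + sin(w²)` grow linearly, which pays for the
second derivatives `±1 + 2w cos(w²)`. In the sum the linear parts cancel: `f' = 2 sin(w²)`
vanishes at `wₙ = √(nπ)`, while `|f''(wₙ)| = 4wₙ` is unbounded.
-/

open Real

def IsL0L1Smooth (L0 L1 : ℝ) (f : ℝ → ℝ) : Prop :=
  ∀ w, |deriv (deriv f) w| ≤ L0 + L1 * |deriv f w|

theorem hasDerivAt_sin_sq (w : ℝ) :
    HasDerivAt (fun w => sin (w ^ 2)) (2 * w * cos (w ^ 2)) w := by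
  simpa [mul_comm] using ((hasDerivAt_pow 2 w).sin)

section Primitive

variable {s : ℝ} {f : ℝ → ℝ}

theorem hasDerivAt_of_eq_integral_linear_add_sin_sq
    (hf : ∀ w, f w = ∫ u in (0 : ℝ)..w, (s * u + sin (u ^ 2))) (w : ℝ) :
    HasDerivAt f (s * w + sin (w ^ 2)) w := by
  rw [funext hf]
  have hcont : Continuous fun u : ℝ => s * u + sin (u ^ 2) := by fun_prop
  exact (hcont.integral_hasStrictDerivAt 0 w).hasDerivAt

theorem deriv_deriv_of_eq_integral_linear_add_sin_sq
    (hf : ∀ w, f w = ∫ u in (0 : ℝ)..w, (s * u + sin (u ^ 2))) (w : ℝ) :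
    deriv (deriv f) w = s + 2 * w * cos (w ^ 2) := by
  have hderiv : deriv f = fun w => s * w + sin (w ^ 2) :=
    funext fun w => (hasDerivAt_of_eq_integral_linear_add_sin_sq hf w).deriv
  rw [hderiv]
  simpa using ((hasDerivAt_id' w).const_mul s |>.fun_add (hasDerivAt_sin_sq w)).deriv

theorem abs_add_two_mul_cos_le (hs : |s| = 1) (w : ℝ) :
    |s + 2 * w * cos (w ^ 2)| ≤ 3 + 3 * |s * w + sin (w ^ 2)| := by
  have hupper : |s + 2 * w * cos (w ^ 2)| ≤ 1 + 2 * |w| := by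
    calc |s + 2 * w * cos (w ^ 2)| ≤ |s| + 2 * |w| * |cos (w ^ 2)| := by
          simpa [abs_mul] using abs_add_le s (2 * w * cos (w ^ 2))
      _ ≤ 1 + 2 * |w| * 1 := by
          rw [hs]; gcongr; exact abs_cos_le_one _
      _ = 1 + 2 * |w| := by ring
  have hlower : |w| - 1 ≤ |s * w + sin (w ^ 2)| := by
    calc |w| - 1 ≤ |s * w| - |sin (w ^ 2)| := by
          rw [abs_mul, hs, one_mul]; linarith [abs_sin_le_one (w ^ 2)]
      _ ≤ |s * w + sin (w ^ 2)| := by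
          simpa using abs_sub_abs_le_abs_sub (s * w) (-sin (w ^ 2))
  rcases le_total |w| 1 with hw | hw
  · linarith [abs_nonneg (s * w + sin (w ^ 2))]
  · linarith

theorem isL0L1Smooth_of_eq_integral_linear_add_sin_sq (hs : |s| = 1)
    (hf : ∀ w, f w = ∫ u in (0 : ℝ)..w, (s * u + sin (u ^ 2))) :
    IsL0L1Smooth 3 3 f := fun w => by
  rw [deriv_deriv_of_eq_integral_linear_add_sin_sq hf,
    (hasDerivAt_of_eq_integral_linear_add_sin_sq hf w).deriv]
  exact abs_add_two_mul_cos_le hs w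

end Primitive

theorem exists_sqrt_nat_mul_pi_gt (L : ℝ) : ∃ n : ℕ, L < √(n * π) := by
  obtain ⟨n, hn⟩ := exists_nat_gt (L ^ 2)
  refine ⟨n, lt_sqrt_of_sq_lt ?_⟩
  nlinarith [pi_gt_three, (Nat.cast_nonneg n : (0 : ℝ) ≤ n)]

theorem not_isL0L1Smooth_of_deriv_eq_two_mul_sin_sq {f : ℝ → ℝ}
    (hf : deriv f = fun w => 2 * sin (w ^ 2)) (L0 L1 : ℝ) : ¬ IsL0L1Smooth L0 L1 f := by
  intro hsmooth
  obtain ⟨n, hn⟩ := exists_sqrt_nat_mul_pi_gt (L0 / 4)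
  set w := √(n * π)
  have hw : w ^ 2 = n * π := sq_sqrt (by positivity)
  have hbound := hsmooth w
  rw [hf, ((hasDerivAt_sin_sq w).const_mul 2).deriv] at hbound
  simp only [hw, sin_nat_mul_pi, cos_nat_mul_pi] at hbound
  simp only [abs_mul, abs_pow, abs_neg, abs_one, one_pow, mul_zero, abs_zero, add_zero,
    abs_two] at hbound
  linarith [le_abs_self w]

/-- The class of `(L0,L1)`-smooth functions of one variable is not closed under summation. -/
theorem stmt_3
    (f1 f2 : ℝ → ℝ)
    (hf1 : ∀ w, f1 w = ∫ u in (0:ℝ)..w, (u + Real.sin (u ^ 2)))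
    (hf2 : ∀ w, f2 w = ∫ v in (0:ℝ)..w, (-v + Real.sin (v ^ 2))) :
    (∀ w, |deriv (deriv f1) w| ≤ 3 + 3 * |deriv f1 w|) ∧
    (∀ w, |deriv (deriv f2) w| ≤ 3 + 3 * |deriv f2 w|) ∧
    ¬ ∃ L0 L1 : ℝ, 0 ≤ L0 ∧ 0 ≤ L1 ∧
      ∀ w, |deriv (deriv (fun w => f1 w + f2 w)) w| ≤
        L0 + L1 * |deriv (fun w => f1 w + f2 w) w| := by
  have hf1' : ∀ w, f1 w = ∫ u in (0:ℝ)..w, (1 * u + sin (u ^ 2)) := by simpa using hf1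
  have hf2' : ∀ w, f2 w = ∫ u in (0:ℝ)..w, (-1 * u + sin (u ^ 2)) := by simpa using hf2
  refine ⟨isL0L1Smooth_of_eq_integral_linear_add_sin_sq (by simp) hf1',
    isL0L1Smooth_of_eq_integral_linear_add_sin_sq (by simp) hf2', ?_⟩
  rintro ⟨L0, L1, -, -, hsmooth⟩
  have hsum : deriv (fun w => f1 w + f2 w) = fun w => 2 * sin (w ^ 2) := funext fun w => by
    rw [((hasDerivAt_of_eq_integral_linear_add_sin_sq hf1' w).fun_add
      (hasDerivAt_of_eq_integral_linear_add_sin_sq hf2' w)).deriv]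
    ring
  exact not_isL0L1Smooth_of_deriv_eq_two_mul_sin_sq hsum L0 L1 hsmooth
end

section
/- The class of (L0, L1)-smooth functions is not closed under affine substitution: the function g(y1, y2) = cos(y1) e^{y1} e^{y2} satisfies ‖∇²g(y)‖₂ ≤ √10 ‖∇g(y)‖ for all y ∈ ℝ², but its restriction f(w) = g(w, 0) = cos(w) e^w admits no constants L0, L1 ≥ 0 with |f''(w)| ≤ L0 + L1|f'(w)| for all w ∈ ℝ. -/
/-!
Write `g y = φ (y 0) * exp (y 1)` with `φ t = cos t * exp t`. Then `∇g = e^{y 1} (φ', φ)` and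
`∇²g = e^{y 1} [[φ'', φ'], [φ', φ]]`; since `φ'' = 2 φ' - 2 φ`, the Frobenius norm of the Hessian
is at most `√10 e^{y 1} √(φ'² + φ²) = √10 ‖∇g‖`. The restriction `φ` itself is not
`(L0, L1)`-smooth: at `w = π/4 + 2πm` we have `φ' w = 0` but `|φ'' w| = √2 e^w → ∞`.
-/

open Real EuclideanSpace Filter

local notation "ℝ²" => EuclideanSpace ℝ (Fin 2)

theorem toDual_euclideanSpace_two (a b : ℝ) :
    InnerProductSpace.toDual ℝ ℝ² !₂[a, b] = a • proj 0 + b • proj 1 := by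
  ext v
  simp only [InnerProductSpace.toDual_apply_apply, PiLp.inner_apply, RCLike.inner_apply,
    ringHom_apply, Fin.sum_univ_two, Matrix.cons_val_zero, Matrix.cons_val_one,
    add_apply, smul_apply, PiLp.proj_apply, smul_eq_mul]
  ring

theorem norm_euclideanSpace_two (a b : ℝ) : ‖!₂[a, b]‖ = √(a ^ 2 + b ^ 2) := by
  simp [EuclideanSpace.norm_eq, Fin.sum_univ_two]

/-- The Frobenius bound for the bilinear form on `ℝ²` with matrix `[[a, b], [c, d]]`. -/
theorem norm_smulRight_proj_add_smulRight_proj_le (a b c d : ℝ) :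
    ‖(a • proj 0 + b • proj 1 : ℝ² →L[ℝ] ℝ).smulRight (proj 0 : ℝ² →L[ℝ] ℝ) +
      (c • proj 0 + d • proj 1 : ℝ² →L[ℝ] ℝ).smulRight (proj 1 : ℝ² →L[ℝ] ℝ)‖ ≤
      √(a ^ 2 + b ^ 2 + c ^ 2 + d ^ 2) := by
  refine ContinuousLinearMap.opNorm_le_bound₂ _ (by positivity) fun v w => ?_
  simp only [add_apply, ContinuousLinearMap.smulRight_apply, smul_apply, PiLp.proj_apply,
    smul_eq_mul, Real.norm_eq_abs]
  rw [EuclideanSpace.norm_eq, EuclideanSpace.norm_eq]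
  simp only [Fin.sum_univ_two, Real.norm_eq_abs, sq_abs]
  rw [← Real.sqrt_mul (by positivity), ← Real.sqrt_mul (by positivity)]
  apply Real.abs_le_sqrt
  nlinarith [sq_nonneg ((a * v 0 + b * v 1) * w 1 - (c * v 0 + d * v 1) * w 0),
    sq_nonneg (a * v 1 - b * v 0), sq_nonneg (c * v 1 - d * v 0),
    sq_nonneg (w 0), sq_nonneg (w 1)]

theorem norm_iteratedFDeriv_two {𝕜 E F : Type*} [NontriviallyNormedField 𝕜]
    [NormedAddCommGroup E] [NormedSpace 𝕜 E] [NormedAddCommGroup F] [NormedSpace 𝕜 F]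
    (f : E → F) (x : E) :
    ‖iteratedFDeriv 𝕜 2 f x‖ = ‖fderiv 𝕜 (fderiv 𝕜 f) x‖ := by
  rw [← norm_iteratedFDeriv_one, norm_iteratedFDeriv_fderiv]

section SeparatedExp

variable {ψ φ φ' φ'' : ℝ → ℝ}

theorem hasFDerivAt_comp_zero_mul_exp_one {a : ℝ} {y : ℝ²} (hψ : HasDerivAt ψ a (y 0)) :
    HasFDerivAt (fun z : ℝ² => ψ (z 0) * exp (z 1))
      ((a * exp (y 1)) • proj 0 + (ψ (y 0) * exp (y 1)) • proj 1 : ℝ² →L[ℝ] ℝ) y := by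
  refine ((hψ.comp_hasFDerivAt y (proj 0 : ℝ² →L[ℝ] ℝ).hasFDerivAt).mul
    ((hasDerivAt_exp _).comp_hasFDerivAt y (proj 1 : ℝ² →L[ℝ] ℝ).hasFDerivAt)).congr_fderiv ?_
  ext v
  simp only [add_apply, smul_apply, smul_eq_mul, PiLp.proj_apply, Function.comp_apply]
  ring

theorem gradient_comp_zero_mul_exp_one (hφ : ∀ t, HasDerivAt φ (φ' t) t) (y : ℝ²) :
    gradient (fun z : ℝ² => φ (z 0) * exp (z 1)) y =
      !₂[φ' (y 0) * exp (y 1), φ (y 0) * exp (y 1)] :=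
  (hasGradientAt_iff_hasFDerivAt.2 <| by
    rw [toDual_euclideanSpace_two]
    exact hasFDerivAt_comp_zero_mul_exp_one (hφ _)).gradient

theorem fderiv_comp_zero_mul_exp_one (hφ : ∀ t, HasDerivAt φ (φ' t) t) :
    fderiv ℝ (fun z : ℝ² => φ (z 0) * exp (z 1)) =
      fun z => (φ' (z 0) * exp (z 1)) • proj 0 + (φ (z 0) * exp (z 1)) • proj 1 :=
  funext fun _ => (hasFDerivAt_comp_zero_mul_exp_one (hφ _)).fderiv

theorem fderiv_fderiv_comp_zero_mul_exp_one (hφ : ∀ t, HasDerivAt φ (φ' t) t)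
    (hφ' : ∀ t, HasDerivAt φ' (φ'' t) t) (y : ℝ²) :
    fderiv ℝ (fderiv ℝ (fun z : ℝ² => φ (z 0) * exp (z 1))) y =
      ((φ'' (y 0) * exp (y 1)) • proj 0 + (φ' (y 0) * exp (y 1)) • proj 1 :
          ℝ² →L[ℝ] ℝ).smulRight (proj 0 : ℝ² →L[ℝ] ℝ) +
        ((φ' (y 0) * exp (y 1)) • proj 0 + (φ (y 0) * exp (y 1)) • proj 1 :
          ℝ² →L[ℝ] ℝ).smulRight (proj 1 : ℝ² →L[ℝ] ℝ) := by
  rw [fderiv_comp_zero_mul_exp_one hφ]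
  exact (((hasFDerivAt_comp_zero_mul_exp_one (hφ' _)).smul_const _).add
    ((hasFDerivAt_comp_zero_mul_exp_one (hφ _)).smul_const _)).fderiv

theorem norm_iteratedFDeriv_two_comp_zero_mul_exp_one_le (hφ : ∀ t, HasDerivAt φ (φ' t) t)
    (hφ' : ∀ t, HasDerivAt φ' (φ'' t) t) {C : ℝ} (hC : 0 ≤ C)
    (hbound : ∀ t, φ'' t ^ 2 + 2 * φ' t ^ 2 + φ t ^ 2 ≤ C ^ 2 * (φ' t ^ 2 + φ t ^ 2)) (y : ℝ²) :
    ‖iteratedFDeriv ℝ 2 (fun z : ℝ² => φ (z 0) * exp (z 1)) y‖ ≤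
      C * ‖gradient (fun z : ℝ² => φ (z 0) * exp (z 1)) y‖ := by
  rw [norm_iteratedFDeriv_two, fderiv_fderiv_comp_zero_mul_exp_one hφ hφ',
    gradient_comp_zero_mul_exp_one hφ, norm_euclideanSpace_two, ← Real.sqrt_sq hC,
    ← Real.sqrt_mul (sq_nonneg C)]
  refine (norm_smulRight_proj_add_smulRight_proj_le _ _ _ _).trans (Real.sqrt_le_sqrt ?_)
  nlinarith [hbound (y 0), sq_nonneg (exp (y 1))]

end SeparatedExp

theorem hasDerivAt_cos_mul_exp (t : ℝ) :
    HasDerivAt (fun t => cos t * exp t) ((cos t - sin t) * exp t) t :=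
  ((hasDerivAt_cos t).mul (hasDerivAt_exp t)).congr_deriv (by ring)

theorem hasDerivAt_cos_sub_sin_mul_exp (t : ℝ) :
    HasDerivAt (fun t => (cos t - sin t) * exp t) (-2 * sin t * exp t) t :=
  (((hasDerivAt_cos t).sub (hasDerivAt_sin t)).mul (hasDerivAt_exp t)).congr_deriv
    (by simp only [Pi.sub_apply]; ring)

theorem norm_iteratedFDeriv_two_cos_mul_exp_le (y : ℝ²) :
    ‖iteratedFDeriv ℝ 2 (fun z : ℝ² => cos (z 0) * exp (z 0) * exp (z 1)) y‖ ≤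
      √10 * ‖gradient (fun z : ℝ² => cos (z 0) * exp (z 0) * exp (z 1)) y‖ := by
  refine norm_iteratedFDeriv_two_comp_zero_mul_exp_one_le hasDerivAt_cos_mul_exp
    hasDerivAt_cos_sub_sin_mul_exp (Real.sqrt_nonneg 10) (fun t => ?_) y
  set u := (cos t - sin t) * exp t
  set v := cos t * exp t
  have hsecond : -2 * sin t * exp t = 2 * u - 2 * v := by ring
  rw [Real.sq_sqrt (by norm_num), hsecond]
  nlinarith [sq_nonneg (2 * u + 2 * v), sq_nonneg v]

theorem not_exists_bound_of_deriv_eq_zero {f : ℝ → ℝ} {w : ℕ → ℝ} (hf' : ∀ m, deriv f (w m) = 0)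
    (hf'' : Tendsto (fun m => |deriv (deriv f) (w m)|) atTop atTop) :
    ¬ ∃ L0 L1 : ℝ, 0 ≤ L0 ∧ 0 ≤ L1 ∧ ∀ w, |deriv (deriv f) w| ≤ L0 + L1 * |deriv f w| := by
  rintro ⟨L0, L1, -, -, hL⟩
  obtain ⟨m, hm⟩ := (hf''.eventually_gt_atTop L0).exists
  have hLm := hL (w m)
  rw [hf', abs_zero, mul_zero, add_zero] at hLm
  exact hLm.not_gt hm

theorem deriv_cos_mul_exp : deriv (fun t => cos t * exp t) = fun t => (cos t - sin t) * exp t :=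
  funext fun t => (hasDerivAt_cos_mul_exp t).deriv

theorem deriv_deriv_cos_mul_exp (t : ℝ) :
    deriv (deriv (fun t => cos t * exp t)) t = -2 * sin t * exp t := by
  rw [deriv_cos_mul_exp]
  exact (hasDerivAt_cos_sub_sin_mul_exp t).deriv

theorem not_exists_bound_cos_mul_exp :
    ¬ ∃ L0 L1 : ℝ, 0 ≤ L0 ∧ 0 ≤ L1 ∧ ∀ w, |deriv (deriv (fun t => cos t * exp t)) w| ≤
      L0 + L1 * |deriv (fun t => cos t * exp t) w| := by
  set w : ℕ → ℝ := fun m => π / 4 + m * (2 * π)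
  have hcos (m : ℕ) : cos (w m) = √2 / 2 := by simp [w, cos_add_nat_mul_two_pi]
  have hsin (m : ℕ) : sin (w m) = √2 / 2 := by simp [w, sin_add_nat_mul_two_pi]
  have hw : Tendsto w atTop atTop :=
    tendsto_atTop_add_const_left _ _ (tendsto_natCast_atTop_atTop.atTop_mul_const (by positivity))
  refine not_exists_bound_of_deriv_eq_zero (w := w) (fun m => ?_) ?_
  · simp only [deriv_cos_mul_exp, hcos, hsin, sub_self, zero_mul]
  · refine ((tendsto_exp_atTop.comp hw).const_mul_atTop (by positivity : (0 : ℝ) < √2)).congr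
      fun m => ?_
    rw [deriv_deriv_cos_mul_exp, hsin, Function.comp_apply,
      show -2 * (√2 / 2) * exp (w m) = -(√2 * exp (w m)) by ring, abs_neg,
      abs_of_pos (by positivity)]

/-- The class of `(L0,L1)`-smooth functions is not closed under affine substitution. -/
theorem stmt_4
    (g : EuclideanSpace ℝ (Fin 2) → ℝ)
    (hg : ∀ y, g y = Real.cos (y 0) * Real.exp (y 0) * Real.exp (y 1))
    (f : ℝ → ℝ) (hf : ∀ w, f w = Real.cos w * Real.exp w) :
    (∀ y, ‖iteratedFDeriv ℝ 2 g y‖ ≤ Real.sqrt 10 * ‖gradient g y‖) ∧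
    ¬ ∃ L0 L1 : ℝ, 0 ≤ L0 ∧ 0 ≤ L1 ∧
      ∀ w, |deriv (deriv f) w| ≤ L0 + L1 * |deriv f w| := by
  obtain rfl : g = fun y => cos (y 0) * exp (y 0) * exp (y 1) := funext hg
  obtain rfl : f = fun w => cos w * exp w := funext hf
  exact ⟨norm_iteratedFDeriv_two_cos_mul_exp_le, not_exists_bound_cos_mul_exp⟩
end

section
/- Bound on supremum of function values along a gradient descent segment: let f be (H0, H1)-smooth, w ∈ ℝ^d with ∇f(w) ≠ 0, u = ∇f(w)/‖∇f(w)‖, and y = w − η u with 0 < η < √(2/H1). Then M_f := sup_{z ∈ [w,y]} (f(z) − f*) satisfies M_f ≤ (f(w) − f* + H0η²/2) / (1 − H1η²/2). -/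
/-!
Restrict `f` to the segment, `g s = f (w - s • u)`. Let `M` be the maximum of `f - f*` on the
segment. On the segment the Hessian of `f` has norm at most `H0 + H1 M`, and `g' 0 = -‖∇f w‖ ≤ 0`,
so Taylor's bound gives `M ≤ f w - f* + (H0 + H1 M) η² / 2`. Since `H1 η² < 2`, this inequality
can be solved for `M`.
-/

open Set

lemma sub_le_sub_of_hasDerivAt_le {g g' G G' : ℝ → ℝ} {a : ℝ}
    (hg : ∀ x, HasDerivAt g (g' x) x) (hG : ∀ x, HasDerivAt G (G' x) x)
    (hle : ∀ x ∈ Ioo 0 a, g' x ≤ G' x) :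
    ∀ x ∈ Icc 0 a, g x - g 0 ≤ G x - G 0 := by
  have hanti : AntitoneOn (fun x => g x - G x) (Icc 0 a) := by
    refine antitoneOn_of_hasDerivWithinAt_nonpos (convex_Icc 0 a)
      (fun x _ => ((hg x).sub (hG x)).continuousAt.continuousWithinAt)
      (fun x _ => ((hg x).sub (hG x)).hasDerivWithinAt) fun x hx => ?_
    rw [interior_Icc] at hx
    linarith [hle x hx]
  intro x hx
  have := hanti ⟨le_rfl, hx.1.trans hx.2⟩ hx hx.1
  simp only at this
  linarith

lemma le_add_mul_add_of_deriv2_le {g g' g'' : ℝ → ℝ} {a C : ℝ}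
    (hg : ∀ x, HasDerivAt g (g' x) x) (hg' : ∀ x, HasDerivAt g' (g'' x) x)
    (hC : ∀ x ∈ Ioo 0 a, g'' x ≤ C) :
    ∀ x ∈ Icc 0 a, g x ≤ g 0 + g' 0 * x + C * x ^ 2 / 2 := by
  have hlin : ∀ x, HasDerivAt (fun x => C * x) C x := fun x => by
    simpa using (hasDerivAt_id x).const_mul C
  have hquad : ∀ x, HasDerivAt (fun x => g' 0 * x + C * x ^ 2 / 2) (g' 0 + C * x) x := fun x =>
    (((hasDerivAt_id x).const_mul (g' 0)).add
      (((hasDerivAt_pow 2 x).const_mul C).div_const 2)).congr_deriv (by simp; ring)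
  have hg'_le : ∀ x ∈ Icc 0 a, g' x - g' 0 ≤ C * x - C * 0 :=
    sub_le_sub_of_hasDerivAt_le hg' hlin hC
  intro x hx
  have := sub_le_sub_of_hasDerivAt_le hg hquad
    (fun y hy => by linarith [hg'_le y (Ioo_subset_Icc_self hy)]) x hx
  linarith

section Segment

variable {E : Type*} [NormedAddCommGroup E] [NormedSpace ℝ E] {f : E → ℝ}

lemma hasDerivAt_comp_sub_smul (hf : Differentiable ℝ f) (x u : E) (s : ℝ) :
    HasDerivAt (fun s : ℝ => f (x - s • u)) (-fderiv ℝ f (x - s • u) u) s := by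
  have hline : HasDerivAt (fun s : ℝ => x - s • u) (-u) s := by
    simpa using ((hasDerivAt_id s).smul_const u).const_sub x
  exact ((hf _).hasFDerivAt.comp_hasDerivAt s hline).congr_deriv (map_neg _ _)

lemma hasDerivAt_fderiv_comp_sub_smul (hf : Differentiable ℝ (fderiv ℝ f)) (x u : E) (s : ℝ) :
    HasDerivAt (fun s : ℝ => -fderiv ℝ f (x - s • u) u)
      (fderiv ℝ (fderiv ℝ f) (x - s • u) u u) s := by
  have hline : HasDerivAt (fun s : ℝ => x - s • u) (-u) s := by
    simpa using ((hasDerivAt_id s).smul_const u).const_sub x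
  exact ((ContinuousLinearMap.apply ℝ ℝ u).hasFDerivAt.comp_hasDerivAt s
    ((hf _).hasFDerivAt.comp_hasDerivAt s hline)).neg.congr_deriv (by simp)

lemma fderiv_fderiv_apply_le (x u : E) :
    fderiv ℝ (fderiv ℝ f) x u u ≤ ‖iteratedFDeriv ℝ 2 f x‖ * ‖u‖ ^ 2 := by
  have hnorm : ‖fderiv ℝ (fderiv ℝ f) x‖ = ‖iteratedFDeriv ℝ 2 f x‖ := by
    rw [← norm_iteratedFDeriv_one, norm_iteratedFDeriv_fderiv]
  calc fderiv ℝ (fderiv ℝ f) x u u ≤ ‖fderiv ℝ (fderiv ℝ f) x u u‖ := le_abs_self _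
    _ ≤ ‖fderiv ℝ (fderiv ℝ f) x‖ * ‖u‖ * ‖u‖ := ContinuousLinearMap.le_opNorm₂ _ _ _
    _ = ‖iteratedFDeriv ℝ 2 f x‖ * ‖u‖ ^ 2 := by rw [hnorm]; ring

lemma apply_sub_smul_le_of_norm_iteratedFDeriv_two_le (hf : ContDiff ℝ 2 f) {x u : E}
    (hu : ‖u‖ ≤ 1) {a C : ℝ} (hC : ∀ s ∈ Icc 0 a, ‖iteratedFDeriv ℝ 2 f (x - s • u)‖ ≤ C) :
    ∀ s ∈ Icc 0 a, f (x - s • u) ≤ f x - fderiv ℝ f x u * s + C * s ^ 2 / 2 := by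
  have hf1 : Differentiable ℝ f := hf.differentiable (by norm_num)
  have hf2 : Differentiable ℝ (fderiv ℝ f) :=
    (hf.fderiv_right (m := 1) (by norm_num)).differentiable one_ne_zero
  intro s hs
  have h := le_add_mul_add_of_deriv2_le (hasDerivAt_comp_sub_smul hf1 x u)
    (hasDerivAt_fderiv_comp_sub_smul hf2 x u) (fun r hr =>
      (fderiv_fderiv_apply_le _ _).trans <| (hC r (Ioo_subset_Icc_self hr)).trans' <|
        mul_le_of_le_one_right (norm_nonneg _) (pow_le_one₀ (norm_nonneg _) hu)) s hs
  rw [zero_smul, sub_zero, neg_mul, ← sub_eq_add_neg] at h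
  exact h

end Segment

lemma fderiv_apply_gradient {F : Type*} [NormedAddCommGroup F] [InnerProductSpace ℝ F]
    [CompleteSpace F] (f : F → ℝ) (x : F) :
    fderiv ℝ f x (gradient f x) = ‖gradient f x‖ ^ 2 := by
  rw [← real_inner_self_eq_norm_sq, gradient, InnerProductSpace.toDual_symm_apply]

lemma pos_and_mul_sq_lt_of_lt_sqrt {H η : ℝ} (hη0 : 0 ≤ η) (hη : η < Real.sqrt (2 / H)) :
    0 < H ∧ H * η ^ 2 < 2 := by
  have hη2 : η ^ 2 < 2 / H := (Real.lt_sqrt hη0).1 hη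
  have hH : 0 < H := (div_pos_iff_of_pos_left two_pos).1 ((sq_nonneg η).trans_lt hη2)
  exact ⟨hH, (lt_div_iff₀' hH).1 hη2⟩

theorem stmt_5_general {d : ℕ} (f : EuclideanSpace ℝ (Fin d) → ℝ)
    (H0 H1 fstar η : ℝ) (w : EuclideanSpace ℝ (Fin d))
    (hf : ContDiff ℝ 2 f)
    (hs : ∀ z, ‖iteratedFDeriv ℝ 2 f z‖ ≤ H0 + H1 * (f z - fstar))
    (hη : η < Real.sqrt (2 / H1)) :
    ∀ t ∈ Set.Icc (0:ℝ) η,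
      f (w - t • (‖gradient f w‖⁻¹ • gradient f w)) - fstar ≤
        (f w - fstar + H0 * η ^ 2 / 2) / (1 - H1 * η ^ 2 / 2) := by
  intro t ht
  have hη0 : 0 ≤ η := ht.1.trans ht.2
  obtain ⟨hH1, hH1η⟩ := pos_and_mul_sq_lt_of_lt_sqrt hη0 hη
  set u := ‖gradient f w‖⁻¹ • gradient f w
  have hu : ‖u‖ ≤ 1 := by
    rw [norm_smul, norm_inv, norm_norm]
    exact inv_mul_le_one_of_le₀ le_rfl (norm_nonneg _)
  have hslope : 0 ≤ fderiv ℝ f w u := by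
    rw [map_smul, fderiv_apply_gradient, smul_eq_mul]
    positivity
  obtain ⟨ts, hts, hmax⟩ := isCompact_Icc.exists_isMaxOn (nonempty_Icc.2 hη0)
    (hf.continuous.comp (by fun_prop : Continuous fun s : ℝ => w - s • u)).continuousOn
  set M := f (w - ts • u) - fstar
  have hC : ∀ s ∈ Icc 0 η, ‖iteratedFDeriv ℝ 2 f (w - s • u)‖ ≤ H0 + H1 * M := fun s hs' => by
    have hle : f (w - s • u) - fstar ≤ M := sub_le_sub_right (hmax hs') _
    exact (hs _).trans (by gcongr)
  have hC0 : 0 ≤ H0 + H1 * M := (norm_nonneg _).trans (hC ts hts)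
  have hM : M ≤ f w - fstar + (H0 + H1 * M) * η ^ 2 / 2 := by
    have := apply_sub_smul_le_of_norm_iteratedFDeriv_two_le hf hu hC ts hts
    nlinarith [mul_nonneg hslope hts.1, pow_le_pow_left₀ hts.1 hts.2 2]
  calc f (w - t • u) - fstar ≤ M := sub_le_sub_right (hmax ht) _
    _ ≤ _ := by
      rw [le_div_iff₀ (by linarith)]
      linear_combination hM

/-- Bound on the supremum of function values along a normalized gradient descent segment. -/
theorem stmt_5 {d : ℕ} (f : EuclideanSpace ℝ (Fin d) → ℝ)
    (H0 H1 fstar η : ℝ) (w : EuclideanSpace ℝ (Fin d))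
    (hH0 : 0 ≤ H0) (hH1 : 0 < H1)
    (hf : ContDiff ℝ 2 f) (hfstar : IsGLB (Set.range f) fstar)
    (hs : ∀ z, ‖iteratedFDeriv ℝ 2 f z‖ ≤ H0 + H1 * (f z - fstar))
    (hgrad : gradient f w ≠ 0)
    (hη0 : 0 < η) (hη : η < Real.sqrt (2 / H1)) :
    ∀ t ∈ Set.Icc (0:ℝ) η,
      f (w - t • (‖gradient f w‖⁻¹ • gradient f w)) - fstar ≤
        (f w - fstar + H0 * η ^ 2 / 2) / (1 - H1 * η ^ 2 / 2) :=
  stmt_5_general f H0 H1 fstar η w hf hs hη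
end

section
/- Descent lemma for (H0,H1)-smooth functions: if f is (H0, H1)-smooth and y = w − η∇f(w) with step size η > 0 satisfying η‖∇f(w)‖ ≤ 1/√H1, then f(y) ≤ f(w) − η‖∇f(w)‖² + (H0 + H1(f(w) − f*)) η² ‖∇f(w)‖². -/
/-!
Along the segment from `w` in a descent direction `v` with `H1 ‖v‖² ≤ 1`, let `A` be the maximum
of `f - fstar`. The Hessian is bounded there by `H0 + H1 A`, so the second-order Taylor bound at
the maximiser gives `A ≤ (f w - fstar) + (H0 + H1 A) / (2 H1)`, i.e. `A ≤ H0 / H1 + 2 (f w - fstar)`.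
Hence the Hessian is bounded on the whole segment by `2 (H0 + H1 (f w - fstar))`, and the Taylor
bound at the endpoint is the descent inequality.
-/

open Set

theorem le_add_mul_add_of_hasDerivAt_of_deriv_le {φ φ' φ'' : ℝ → ℝ} {C a : ℝ} (ha : 0 ≤ a)
    (hφ : ∀ t, HasDerivAt φ (φ' t) t) (hφ' : ∀ t, HasDerivAt φ' (φ'' t) t)
    (hC : ∀ t ∈ Icc 0 a, φ'' t ≤ C) :
    φ a ≤ φ 0 + a * φ' 0 + C * a ^ 2 / 2 := by
  have hφ'_le : ∀ t ∈ Icc 0 a, φ' t ≤ φ' 0 + C * t :=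
    image_le_of_deriv_right_le_deriv_boundary (B' := fun _ => C)
      (fun t _ => (hφ' t).continuousAt.continuousWithinAt)
      (fun t _ => (hφ' t).hasDerivWithinAt) (by simp) (by fun_prop)
      (fun t _ => (((hasDerivAt_id t).const_mul C).const_add (φ' 0)).hasDerivWithinAt.congr_deriv
        (by simp))
      (fun t ht => hC t (Ico_subset_Icc_self ht))
  exact image_le_of_deriv_right_le_deriv_boundary (B := fun t => φ 0 + t * φ' 0 + C * t ^ 2 / 2)
      (fun t _ => (hφ t).continuousAt.continuousWithinAt)
      (fun t _ => (hφ t).hasDerivWithinAt) (by simp) (by fun_prop)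
      (fun t _ => ((((hasDerivAt_id t).mul_const (φ' 0)).const_add (φ 0)).add
        (((hasDerivAt_pow 2 t).const_mul C).div_const 2)).hasDerivWithinAt.congr_deriv
          (by simp; ring))
      (fun t ht => hφ'_le t (Ico_subset_Icc_self ht)) ⟨ha, le_rfl⟩

variable {E F : Type*} [NormedAddCommGroup E] [NormedSpace ℝ E] [NormedAddCommGroup F]
  [NormedSpace ℝ F]

theorem Differentiable.hasDerivAt_comp_add_smul {g : E → F} (hg : Differentiable ℝ g) (x v : E)
    (t : ℝ) : HasDerivAt (fun s : ℝ => g (x + s • v)) (fderiv ℝ g (x + t • v) v) t := by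
  have := (hg (x + t • v)).hasFDerivAt.comp_hasDerivAt t
    (((hasDerivAt_id t).smul_const v).const_add x)
  rwa [one_smul] at this

theorem norm_fderiv_fderiv_apply_le (f : E → F) (x v : E) :
    ‖fderiv ℝ (fderiv ℝ f) x v v‖ ≤ ‖iteratedFDeriv ℝ 2 f x‖ * ‖v‖ ^ 2 := by
  have h := (iteratedFDeriv ℝ 2 f x).le_opNorm ![v, v]
  simpa [iteratedFDeriv_two_apply, Fin.prod_univ_two, sq] using h

theorem ContDiff.le_add_fderiv_add_of_norm_iteratedFDeriv_le {f : E → ℝ} (hf : ContDiff ℝ 2 f)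
    (x v : E) {M a : ℝ} (ha : 0 ≤ a)
    (hM : ∀ t ∈ Icc 0 a, ‖iteratedFDeriv ℝ 2 f (x + t • v)‖ ≤ M) :
    f (x + a • v) ≤ f x + a * fderiv ℝ f x v + M * ‖v‖ ^ 2 * a ^ 2 / 2 := by
  have hdf : Differentiable ℝ f := hf.differentiable (by norm_num)
  have hdf' : Differentiable ℝ (fderiv ℝ f) :=
    (hf.fderiv_right (m := 1) (by norm_num)).differentiable one_ne_zero
  have hφ' (t : ℝ) : HasDerivAt (fun s : ℝ => fderiv ℝ f (x + s • v) v)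
      (fderiv ℝ (fderiv ℝ f) (x + t • v) v v) t := by
    simpa using (hdf'.hasDerivAt_comp_add_smul x v t).clm_apply (hasDerivAt_const t v)
  have := le_add_mul_add_of_hasDerivAt_of_deriv_le ha (hdf.hasDerivAt_comp_add_smul x v) hφ'
    (C := M * ‖v‖ ^ 2) fun t ht => calc
      _ ≤ ‖fderiv ℝ (fderiv ℝ f) (x + t • v) v v‖ := Real.le_norm_self _
      _ ≤ ‖iteratedFDeriv ℝ 2 f (x + t • v)‖ * ‖v‖ ^ 2 := norm_fderiv_fderiv_apply_le f _ v
      _ ≤ M * ‖v‖ ^ 2 := by gcongr; exact hM t ht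
  simpa using this

theorem ContDiff.sub_le_of_norm_iteratedFDeriv_le_add_mul {f : E → ℝ} (hf : ContDiff ℝ 2 f)
    {H0 H1 fstar : ℝ} (hH1 : 0 < H1)
    (hs : ∀ z, ‖iteratedFDeriv ℝ 2 f z‖ ≤ H0 + H1 * (f z - fstar))
    {x v : E} (hv : H1 * ‖v‖ ^ 2 ≤ 1) (hdesc : fderiv ℝ f x v ≤ 0) {t : ℝ} (ht : t ∈ Icc 0 1) :
    f (x + t • v) - fstar ≤ H0 / H1 + 2 * (f x - fstar) := by
  have hcont : Continuous fun s : ℝ => f (x + s • v) := by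
    have := hf.continuous; fun_prop
  obtain ⟨ts, hts, hmax⟩ :=
    isCompact_Icc.exists_isMaxOn (nonempty_Icc.2 zero_le_one) hcont.continuousOn
  set A := f (x + ts • v) - fstar
  have hM : ∀ s ∈ Icc 0 ts, ‖iteratedFDeriv ℝ 2 f (x + s • v)‖ ≤ H0 + H1 * A := fun s hs' =>
    (hs _).trans (by gcongr; exact sub_le_sub_right (hmax ⟨hs'.1, hs'.2.trans hts.2⟩) fstar)
  have htaylor := hf.le_add_fderiv_add_of_norm_iteratedFDeriv_le x v hts.1 hM
  have hM0 : 0 ≤ H0 + H1 * A := (norm_nonneg _).trans (hs _)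
  have hts2 : ts ^ 2 ≤ 1 := pow_le_one₀ hts.1 hts.2
  have hA : H1 * A ≤ H1 * (f x - fstar) + (H0 + H1 * A) / 2 := by
    nlinarith [mul_nonneg hts.1 (neg_nonneg.2 hdesc),
      mul_le_mul hv hts2 (by positivity) zero_le_one, mul_nonneg hM0 (sq_nonneg ts)]
  calc f (x + t • v) - fstar ≤ A := sub_le_sub_right (hmax ht) fstar
    _ ≤ H0 / H1 + 2 * (f x - fstar) := by
      rw [div_add' _ _ _ hH1.ne', le_div_iff₀ hH1]; linarith

theorem ContDiff.norm_iteratedFDeriv_add_smul_le {f : E → ℝ} (hf : ContDiff ℝ 2 f)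
    {H0 H1 fstar : ℝ} (hH1 : 0 < H1)
    (hs : ∀ z, ‖iteratedFDeriv ℝ 2 f z‖ ≤ H0 + H1 * (f z - fstar))
    {x v : E} (hv : H1 * ‖v‖ ^ 2 ≤ 1) (hdesc : fderiv ℝ f x v ≤ 0) {t : ℝ} (ht : t ∈ Icc 0 1) :
    ‖iteratedFDeriv ℝ 2 f (x + t • v)‖ ≤ 2 * (H0 + H1 * (f x - fstar)) :=
  calc ‖iteratedFDeriv ℝ 2 f (x + t • v)‖ ≤ H0 + H1 * (f (x + t • v) - fstar) := hs _
    _ ≤ H0 + H1 * (H0 / H1 + 2 * (f x - fstar)) := by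
      gcongr; exact hf.sub_le_of_norm_iteratedFDeriv_le_add_mul hH1 hs hv hdesc ht
    _ = 2 * (H0 + H1 * (f x - fstar)) := by field_simp; ring

theorem ContDiff.le_add_fderiv_add_of_norm_iteratedFDeriv_le_add_mul {f : E → ℝ}
    (hf : ContDiff ℝ 2 f) {H0 H1 fstar : ℝ} (hH1 : 0 < H1)
    (hs : ∀ z, ‖iteratedFDeriv ℝ 2 f z‖ ≤ H0 + H1 * (f z - fstar))
    {x v : E} (hv : H1 * ‖v‖ ^ 2 ≤ 1) (hdesc : fderiv ℝ f x v ≤ 0) :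
    f (x + v) ≤ f x + fderiv ℝ f x v + (H0 + H1 * (f x - fstar)) * ‖v‖ ^ 2 := by
  have := hf.le_add_fderiv_add_of_norm_iteratedFDeriv_le x v zero_le_one
    fun t ht => hf.norm_iteratedFDeriv_add_smul_le hH1 hs hv hdesc ht
  simp only [one_smul, one_mul, one_pow, mul_one] at this
  linarith

theorem stmt_7_general {d : ℕ} (f : EuclideanSpace ℝ (Fin d) → ℝ)
    (H0 H1 fstar η : ℝ) (w : EuclideanSpace ℝ (Fin d))
    (hH1 : 0 < H1)
    (hf : ContDiff ℝ 2 f)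
    (hs : ∀ z, ‖iteratedFDeriv ℝ 2 f z‖ ≤ H0 + H1 * (f z - fstar))
    (hη0 : 0 < η) (hstep : η * ‖gradient f w‖ ≤ 1 / Real.sqrt H1) :
    f (w - η • gradient f w) ≤ f w - η * ‖gradient f w‖ ^ 2
      + (H0 + H1 * (f w - fstar)) * η ^ 2 * ‖gradient f w‖ ^ 2 := by
  set g := gradient f w
  have hnorm : ‖-(η • g)‖ = η * ‖g‖ := by rw [norm_neg, norm_smul, Real.norm_of_nonneg hη0.le]
  have hderiv : fderiv ℝ f w (-(η • g)) = -(η * ‖g‖ ^ 2) := by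
    rw [← inner_gradient_left, inner_neg_right, inner_smul_right, real_inner_self_eq_norm_sq]
  rw [le_div_iff₀ (Real.sqrt_pos.2 hH1)] at hstep
  have hv : H1 * ‖-(η • g)‖ ^ 2 ≤ 1 :=
    calc H1 * ‖-(η • g)‖ ^ 2 = (η * ‖g‖ * √H1) ^ 2 := by
          rw [hnorm, mul_pow _ √H1, Real.sq_sqrt hH1.le]; ring
      _ ≤ 1 := pow_le_one₀ (by positivity) hstep
  have := hf.le_add_fderiv_add_of_norm_iteratedFDeriv_le_add_mul hH1 hs hv
    (by rw [hderiv]; exact neg_nonpos.2 (by positivity))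
  rw [← sub_eq_add_neg, hderiv, hnorm] at this
  linarith

/-- Descent lemma for `(H0,H1)`-smooth functions. -/
theorem stmt_7 {d : ℕ} (f : EuclideanSpace ℝ (Fin d) → ℝ)
    (H0 H1 fstar η : ℝ) (w : EuclideanSpace ℝ (Fin d))
    (hH0 : 0 ≤ H0) (hH1 : 0 < H1)
    (hf : ContDiff ℝ 2 f) (hfstar : IsGLB (Set.range f) fstar)
    (hs : ∀ z, ‖iteratedFDeriv ℝ 2 f z‖ ≤ H0 + H1 * (f z - fstar))
    (hη0 : 0 < η) (hstep : η * ‖gradient f w‖ ≤ 1 / Real.sqrt H1) :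
    f (w - η • gradient f w) ≤ f w - η * ‖gradient f w‖ ^ 2
      + (H0 + H1 * (f w - fstar)) * η ^ 2 * ‖gradient f w‖ ^ 2 :=
  stmt_7_general f H0 H1 fstar η w hH1 hf hs hη0 hstep
end

section
/- Nonconvex convergence of GD with adaptive warm-up step size (basic rate): under (H0, H1)-smoothness, the GD iterates w_{k+1} = w_k − η_k∇f(w_k) with η_k = 1/(10H0 + 20H1(f(w_k)−f*)) satisfy (1/K)∑_{k=0}^{K−1}‖∇f(w_k)‖² ≤ 20H0(f(w_0)−f*)/K + 40H1(f(w_0)−f*)²/K. -/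
/-- Nonconvex convergence of GD with the adaptive warm-up step size (basic rate). -/
theorem stmt_10 {d : ℕ} (f : EuclideanSpace ℝ (Fin d) → ℝ)
    (H0 H1 fstar : ℝ) (hH0 : 0 < H0) (hH1 : 0 < H1)
    (hf : ContDiff ℝ 2 f) (hfstar : IsGLB (Set.range f) fstar)
    (hs : ∀ z, ‖iteratedFDeriv ℝ 2 f z‖ ≤ H0 + H1 * (f z - fstar))
    (w : ℕ → EuclideanSpace ℝ (Fin d)) (η : ℕ → ℝ)
    (hη : ∀ k, η k = 1 / (10 * H0 + 20 * H1 * (f (w k) - fstar)))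
    (hstep : ∀ k, w (k + 1) = w k - η k • gradient f (w k))
    (hdesc : ∀ k, f (w (k + 1)) ≤ f (w k) - (η k / 2) * ‖gradient f (w k)‖ ^ 2)
    (K : ℕ) (hK : 0 < K) :
    (1 / (K : ℝ)) * ∑ k ∈ Finset.range K, ‖gradient f (w k)‖ ^ 2 ≤
      20 * H0 * (f (w 0) - fstar) / K + 40 * H1 * (f (w 0) - fstar) ^ 2 / K := by
  set Δ : ℕ → ℝ := fun k => f (w k) - fstar with hΔdef
  have hΔf : ∀ k, Δ k = f (w k) - fstar := fun _ => rfl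
  clear_value Δ
  have hΔnn : ∀ k, 0 ≤ Δ k := fun k => by
    rw [hΔf k]; exact sub_nonneg.2 (hfstar.1 (Set.mem_range_self (w k)))
  have hDpos : ∀ k, 0 < 10 * H0 + 20 * H1 * Δ k := fun k => by
    have := hΔnn k; nlinarith
  have key : ∀ k, ‖gradient f (w k)‖ ^ 2 ≤
      20 * H0 * (Δ k - Δ (k + 1)) + 40 * H1 * (Δ k ^ 2 - Δ (k + 1) ^ 2) := by
    intro k
    have hd := hdesc k
    have hηk : η k = 1 / (10 * H0 + 20 * H1 * Δ k) := by rw [hΔf k]; exact hη k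
    have hD := hDpos k
    have hηpos : 0 < η k := by rw [hηk]; positivity
    have hg : 0 ≤ ‖gradient f (w k)‖ ^ 2 := sq_nonneg _
    -- f (w (k+1)) ≤ f (w k), so Δ (k+1) ≤ Δ k
    have hmono : Δ (k + 1) ≤ Δ k := by
      have : f (w (k + 1)) ≤ f (w k) := le_trans hd (by nlinarith)
      rw [hΔf k, hΔf (k + 1)]; linarith
    have hηD : η k * (10 * H0 + 20 * H1 * Δ k) = 1 := by
      rw [hηk]; field_simp
    have h1 : ‖gradient f (w k)‖ ^ 2 ≤
        (20 * H0 + 40 * H1 * Δ k) * (Δ k - Δ (k + 1)) := by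
      have hstepb : (η k / 2) * ‖gradient f (w k)‖ ^ 2 ≤ Δ k - Δ (k + 1) := by
        rw [hΔf k, hΔf (k + 1)]; linarith
      have h2D : (0:ℝ) ≤ 2 * (10 * H0 + 20 * H1 * Δ k) := by positivity
      have hm := mul_le_mul_of_nonneg_left hstepb h2D
      have hx : η k * (10 * H0 + 20 * H1 * Δ k) * ‖gradient f (w k)‖ ^ 2
          = ‖gradient f (w k)‖ ^ 2 := by rw [hηD]; ring
      linarith [hm, hx]
    have h3 := hΔnn (k + 1)
    nlinarith [mul_nonneg (mul_nonneg hH1.le (sub_nonneg.2 hmono)) h3]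
  have hsum : ∑ k ∈ Finset.range K, ‖gradient f (w k)‖ ^ 2 ≤
      20 * H0 * Δ 0 + 40 * H1 * Δ 0 ^ 2 := by
    calc ∑ k ∈ Finset.range K, ‖gradient f (w k)‖ ^ 2
        ≤ ∑ k ∈ Finset.range K,
            (20 * H0 * (Δ k - Δ (k + 1)) + 40 * H1 * (Δ k ^ 2 - Δ (k + 1) ^ 2)) :=
          Finset.sum_le_sum fun k _ => key k
      _ = 20 * H0 * (Δ 0 - Δ K) + 40 * H1 * (Δ 0 ^ 2 - Δ K ^ 2) := by
          rw [Finset.sum_add_distrib, ← Finset.mul_sum, ← Finset.mul_sum]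
          rw [Finset.sum_range_sub' (fun k => Δ k), Finset.sum_range_sub' (fun k => Δ k ^ 2)]
      _ ≤ 20 * H0 * Δ 0 + 40 * H1 * Δ 0 ^ 2 := by
          have := hΔnn K; nlinarith
  have hKpos : (0 : ℝ) < K := Nat.cast_pos.2 hK
  have hfin := mul_le_mul_of_nonneg_left hsum (by positivity : (0:ℝ) ≤ 1 / (K:ℝ))
  have hΔ0 : Δ 0 = f (w 0) - fstar := hΔf 0
  rw [hΔ0] at hfin
  have hr : 1 / (K:ℝ) * (20 * H0 * (f (w 0) - fstar) + 40 * H1 * (f (w 0) - fstar) ^ 2)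
      = 20 * H0 * (f (w 0) - fstar) / K + 40 * H1 * (f (w 0) - fstar) ^ 2 / K := by ring
  linarith [hfin, hr.le, hr.ge]
end

section
/- Distance decrease under the Aiming condition: let f be (H0,H1)-smooth and satisfy the Aiming condition with constant θ > 0 around the set S of global minimizers. Then GD iterates w_{k+1} = w_k − η_k∇f(w_k) with η_k = θ/(10H0 + 20H1(f(w_k)−f*)) satisfy dist(w_{k+1}, S)² ≤ dist(w_k, S)² − η_k θ (f(w_k) − f*). In particular dist(w_k, S) is nonincreasing. -/
/-!
Along a unit direction `v` with `f'(w) v ≤ 0`, the gap `ψ(t) = f(w + t v) - f*` is nonnegative and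
has `ψ'' ≤ H0 + H1 ψ`. As long as `ψ` stays below `3 ψ(0)`, Taylor's bound with `M = H0 + 3 H1 ψ(0)`
keeps it below `ψ(0)` up to time `|ψ'(0)| / M`, so a continuity argument shows that it never leaves
this barrier there, and evaluating Taylor's bound at that time gives `ψ'(0)² ≤ 2 M ψ(0)`.
With this gradient bound, a gradient step measured against the Aiming point `π(w)` gains
`2 η θ (f(w) - f*)` and, for the given step size, loses at most `η θ (f(w) - f*)` in the squared
distance.
-/

open Set Metric
open scoped RealInnerProductSpace

theorem ContinuousOn.forall_lt_of_forall_Ico_lt_imp_lt {ψ : ℝ → ℝ} {a b c : ℝ}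
    (hψ : ContinuousOn ψ (Icc a b))
    (hstep : ∀ x ∈ Icc a b, (∀ t ∈ Ico a x, ψ t < c) → ψ x < c) :
    ∀ x ∈ Icc a b, ψ x < c := by
  by_contra! ⟨x₀, hx₀, hcx₀⟩
  have hA : IsCompact (Icc a b ∩ ψ ⁻¹' Ici c) :=
    isCompact_Icc.of_isClosed_subset
      (hψ.preimage_isClosed_of_isClosed isClosed_Icc isClosed_Ici) inter_subset_left
  obtain ⟨t₁, ⟨ht₁, hct₁⟩, hleast⟩ := hA.exists_isLeast ⟨x₀, hx₀, hcx₀⟩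
  refine (hstep t₁ ht₁ fun t ht => ?_).not_ge hct₁
  by_contra! hct
  exact (hleast ⟨⟨ht.1, ht.2.le.trans ht₁.2⟩, hct⟩).not_gt ht.2

theorem le_add_deriv_mul_add_of_deriv2_le {φ φ' φ'' : ℝ → ℝ} {a b M : ℝ} (hab : a ≤ b)
    (hφ : ∀ t, HasDerivAt φ (φ' t) t) (hφ' : ∀ t, HasDerivAt φ' (φ'' t) t)
    (hM : ∀ t ∈ Ico a b, φ'' t ≤ M) :
    φ b ≤ φ a + φ' a * (b - a) + M * (b - a) ^ 2 / 2 := by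
  have hB₁ : ∀ t, HasDerivAt (fun t => φ' a + M * (t - a)) M t := fun t => by
    simpa using (((hasDerivAt_id t).sub_const a).const_mul M).const_add (φ' a)
  have hB₂ : ∀ t, HasDerivAt (fun t => φ a + φ' a * (t - a) + M * (t - a) ^ 2 / 2)
      (φ' a + M * (t - a)) t := fun t => by
    have h := ((((hasDerivAt_id t).sub_const a).const_mul (φ' a)).const_add (φ a)).add
      ((((hasDerivAt_id t).sub_const a).pow 2).const_mul M |>.div_const 2)
    exact h.congr_deriv (by simp only [id, Nat.cast_ofNat]; ring)
  have hφ'_le : ∀ t ∈ Icc a b, φ' t ≤ φ' a + M * (t - a) :=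
    image_le_of_deriv_right_le_deriv_boundary
      (fun t _ => (hφ' t).continuousAt.continuousWithinAt) (fun t _ => (hφ' t).hasDerivWithinAt)
      (by simp) (fun t _ => (hB₁ t).continuousAt.continuousWithinAt)
      (fun t _ => (hB₁ t).hasDerivWithinAt) hM
  exact image_le_of_deriv_right_le_deriv_boundary
    (fun t _ => (hφ t).continuousAt.continuousWithinAt) (fun t _ => (hφ t).hasDerivWithinAt)
    (by simp) (fun t _ => (hB₂ t).continuousAt.continuousWithinAt)
    (fun t _ => (hB₂ t).hasDerivWithinAt) (fun t ht => hφ'_le t (Ico_subset_Icc_self ht))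
    (right_mem_Icc.2 hab)

theorem sq_deriv_le_of_nonneg_of_deriv2_le {ψ ψ' ψ'' : ℝ → ℝ} {a b : ℝ} (ha : 0 < a) (hb : 0 ≤ b)
    (hψ_nonneg : ∀ t, 0 ≤ ψ t) (hψ : ∀ t, HasDerivAt ψ (ψ' t) t)
    (hψ' : ∀ t, HasDerivAt ψ' (ψ'' t) t) (hψ'' : ∀ t, ψ'' t ≤ a + b * ψ t) (hψ'0 : ψ' 0 ≤ 0) :
    ψ' 0 ^ 2 ≤ 2 * (a + 3 * b * ψ 0) * ψ 0 := by
  rcases (hψ_nonneg 0).eq_or_lt with h0 | h0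
  · have hmin : IsLocalMin ψ 0 := Filter.Eventually.of_forall fun t => h0 ▸ hψ_nonneg t
    rw [hmin.hasDerivAt_eq_zero (hψ 0), ← h0]
    simp
  set Δ := ψ 0
  set M := a + 3 * b * Δ
  have hM : 0 < M := by positivity
  set T := -ψ' 0 / M
  have hT : 0 ≤ T := div_nonneg (neg_nonneg.2 hψ'0) hM.le
  have taylor : ∀ x, 0 ≤ x → (∀ t ∈ Ico 0 x, ψ t < 3 * Δ) →
      ψ x ≤ Δ + ψ' 0 * x + M * x ^ 2 / 2 := fun x hx hbarrier => by
    simpa using le_add_deriv_mul_add_of_deriv2_le hx hψ hψ' fun t ht =>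
      (hψ'' t).trans (by nlinarith [hbarrier t ht])
  have hbarrier : ∀ x ∈ Icc 0 T, ψ x < 3 * Δ := by
    refine ContinuousOn.forall_lt_of_forall_Ico_lt_imp_lt
      (fun t _ => (hψ t).continuousAt.continuousWithinAt) fun x hx hbefore => ?_
    have hMx : M * x ≤ -ψ' 0 := (le_div_iff₀' hM).1 hx.2
    nlinarith [taylor x hx.1 hbefore, mul_le_mul_of_nonneg_right hMx hx.1,
      mul_nonpos_of_nonpos_of_nonneg hψ'0 hx.1]
  have hT_eval : ψ' 0 * T + M * T ^ 2 / 2 = -(ψ' 0 ^ 2 / (2 * M)) := by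
    simp only [T]
    field_simp
    ring
  have htaylorT := taylor T hT fun t ht => hbarrier t (Ico_subset_Icc_self ht)
  have : ψ' 0 ^ 2 / (2 * M) ≤ Δ := by linarith [hψ_nonneg T]
  rwa [div_le_iff₀ (by positivity), mul_comm Δ] at this

section GradientBound

variable {F : Type*} [NormedAddCommGroup F] [NormedSpace ℝ F] {f : F → ℝ} {H0 H1 fstar : ℝ}

theorem sq_fderiv_apply_le_of_norm_iteratedFDeriv_two_le (hf : ContDiff ℝ 2 f)
    (hlb : ∀ z, fstar ≤ f z) (hH0 : 0 < H0) (hH1 : 0 ≤ H1)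
    (hs : ∀ z, ‖iteratedFDeriv ℝ 2 f z‖ ≤ H0 + H1 * (f z - fstar)) (w : F) {v : F}
    (hv : ‖v‖ = 1) :
    fderiv ℝ f w v ^ 2 ≤ 2 * (H0 + 3 * H1 * (f w - fstar)) * (f w - fstar) := by
  wlog hneg : fderiv ℝ f w v ≤ 0 generalizing v
  · simpa using this (v := -v) (by rwa [norm_neg]) (by simp; linarith)
  have hline : ∀ t : ℝ, HasDerivAt (fun t : ℝ => w + t • v) v t := fun t => by
    simpa using ((hasDerivAt_id t).smul_const v).const_add w
  have hdf : Differentiable ℝ f := hf.differentiable (by norm_num)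
  have hddf : Differentiable ℝ (fderiv ℝ f) :=
    (hf.fderiv_right (m := 1) (by norm_num)).differentiable one_ne_zero
  have hψ'' : ∀ t : ℝ, fderiv ℝ (fderiv ℝ f) (w + t • v) v v ≤
      H0 + H1 * (f (w + t • v) - fstar) := fun t => by
    have hnorm : ‖fderiv ℝ (fderiv ℝ f) (w + t • v)‖ = ‖iteratedFDeriv ℝ 2 f (w + t • v)‖ := by
      rw [← norm_iteratedFDeriv_one, norm_iteratedFDeriv_fderiv]
    calc fderiv ℝ (fderiv ℝ f) (w + t • v) v v
        ≤ ‖fderiv ℝ (fderiv ℝ f) (w + t • v)‖ * ‖v‖ * ‖v‖ :=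
          (le_abs_self _).trans ((fderiv ℝ (fderiv ℝ f) (w + t • v)).le_opNorm₂ v v)
      _ ≤ H0 + H1 * (f (w + t • v) - fstar) := by rw [hv, hnorm]; simpa using hs _
  simpa using sq_deriv_le_of_nonneg_of_deriv2_le (ψ := fun t => f (w + t • v) - fstar)
    (ψ' := fun t => fderiv ℝ f (w + t • v) v) hH0 hH1 (fun t => sub_nonneg.2 (hlb _))
    (fun t => ((hdf _).hasFDerivAt.comp_hasDerivAt t (hline t)).sub_const fstar)
    (fun t => by
      simpa using ((hddf _).hasFDerivAt.comp_hasDerivAt t (hline t)).clm_apply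
        (hasDerivAt_const t v))
    hψ'' (by simpa using hneg)

theorem norm_fderiv_sq_le_of_norm_iteratedFDeriv_two_le (hf : ContDiff ℝ 2 f)
    (hlb : ∀ z, fstar ≤ f z) (hH0 : 0 < H0) (hH1 : 0 ≤ H1)
    (hs : ∀ z, ‖iteratedFDeriv ℝ 2 f z‖ ≤ H0 + H1 * (f z - fstar)) (w : F) :
    ‖fderiv ℝ f w‖ ^ 2 ≤ 2 * (H0 + 3 * H1 * (f w - fstar)) * (f w - fstar) := by
  have hbound := ContinuousLinearMap.opNorm_le_of_unit_norm (f := fderiv ℝ f w) (Real.sqrt_nonneg _)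
    fun v hv => (Real.norm_eq_abs _).trans_le <| Real.abs_le_sqrt <|
      sq_fderiv_apply_le_of_norm_iteratedFDeriv_two_le hf hlb hH0 hH1 hs w hv
  calc ‖fderiv ℝ f w‖ ^ 2 ≤ √(2 * (H0 + 3 * H1 * (f w - fstar)) * (f w - fstar)) ^ 2 :=
        pow_le_pow_left₀ (norm_nonneg _) hbound 2
    _ = _ := Real.sq_sqrt (by have := hlb w; positivity)

end GradientBound

theorem infDist_sub_smul_sq_le {E : Type*} [NormedAddCommGroup E] [InnerProductSpace ℝ E]
    {S : Set E} {x p : E} (hp : p ∈ S) (η : ℝ) (g : E) :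
    infDist (x - η • g) S ^ 2 ≤ ‖x - p‖ ^ 2 - 2 * η * ⟪g, x - p⟫ + η ^ 2 * ‖g‖ ^ 2 := by
  have h : infDist (x - η • g) S ≤ ‖(x - p) - η • g‖ := by
    rw [sub_right_comm, ← dist_eq_norm]
    exact infDist_le_dist_of_mem hp
  calc infDist (x - η • g) S ^ 2 ≤ ‖(x - p) - η • g‖ ^ 2 := pow_le_pow_left₀ infDist_nonneg h 2
    _ = _ := by
      rw [norm_sub_sq_real, real_inner_smul_right, real_inner_comm, norm_smul, mul_pow,
        Real.norm_eq_abs, sq_abs]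
      ring

theorem stmt_11_general {d : ℕ} (f : EuclideanSpace ℝ (Fin d) → ℝ)
    (H0 H1 fstar θ : ℝ) (hH0 : 0 < H0) (hH1 : 0 < H1) (hθ : 0 < θ)
    (hf : ContDiff ℝ 2 f) (hfstar : IsGLB (Set.range f) fstar)
    (S : Set (EuclideanSpace ℝ (Fin d)))
    (π : EuclideanSpace ℝ (Fin d) → EuclideanSpace ℝ (Fin d))
    (hπ : ∀ z, π z ∈ S ∧ ‖z - π z‖ = Metric.infDist z S)
    (hs : ∀ z, ‖iteratedFDeriv ℝ 2 f z‖ ≤ H0 + H1 * (f z - fstar))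
    (haim : ∀ z, θ * (f z - fstar) ≤ ⟪gradient f z, z - π z⟫)
    (w : ℕ → EuclideanSpace ℝ (Fin d)) (η : ℕ → ℝ)
    (hη : ∀ k, η k = θ / (10 * H0 + 20 * H1 * (f (w k) - fstar)))
    (hstep : ∀ k, w (k + 1) = w k - η k • gradient f (w k)) :
    (∀ k, (Metric.infDist (w (k + 1)) S) ^ 2 ≤
        (Metric.infDist (w k) S) ^ 2 - η k * θ * (f (w k) - fstar)) ∧
    (∀ k, Metric.infDist (w (k + 1)) S ≤ Metric.infDist (w k) S) := by
  have hlb : ∀ z, fstar ≤ f z := fun z => hfstar.1 (Set.mem_range_self z)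
  have hη_nonneg : ∀ k, 0 ≤ η k := fun k => by
    rw [hη]; have := hlb (w k); positivity
  have hdecrease : ∀ k, (Metric.infDist (w (k + 1)) S) ^ 2 ≤
      (Metric.infDist (w k) S) ^ 2 - η k * θ * (f (w k) - fstar) := fun k => by
    have hΔ : 0 ≤ f (w k) - fstar := sub_nonneg.2 (hlb _)
    have hgrad : ‖gradient f (w k)‖ ^ 2 ≤
        2 * (H0 + 3 * H1 * (f (w k) - fstar)) * (f (w k) - fstar) := by
      rw [gradient, LinearIsometryEquiv.norm_map]
      exact norm_fderiv_sq_le_of_norm_iteratedFDeriv_two_le hf hlb hH0 hH1.le hs _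
    have hηD : η k * (10 * H0 + 20 * H1 * (f (w k) - fstar)) = θ := by
      rw [hη]; field_simp
    have hloss : η k ^ 2 * ‖gradient f (w k)‖ ^ 2 ≤ η k * θ * (f (w k) - fstar) := by
      nlinarith [mul_le_mul_of_nonneg_left hgrad (sq_nonneg (η k)),
        mul_nonneg (sq_nonneg (η k)) (mul_nonneg hH0.le hΔ),
        mul_nonneg (sq_nonneg (η k)) (mul_nonneg (mul_nonneg hH1.le hΔ) hΔ)]
    have hdist := infDist_sub_smul_sq_le (x := w k) (hπ (w k)).1 (η k) (gradient f (w k))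
    rw [← hstep, (hπ (w k)).2] at hdist
    nlinarith [mul_le_mul_of_nonneg_left (haim (w k)) (hη_nonneg k)]
  refine ⟨hdecrease, fun k => (pow_le_pow_iff_left₀ infDist_nonneg infDist_nonneg two_ne_zero).1 ?_⟩
  nlinarith [hdecrease k, mul_nonneg (mul_nonneg (hη_nonneg k) hθ.le) (sub_nonneg.2 (hlb (w k)))]

/-- Distance decrease under the Aiming condition for GD with the adaptive warm-up step. -/
theorem stmt_11 {d : ℕ} (f : EuclideanSpace ℝ (Fin d) → ℝ)
    (H0 H1 fstar θ : ℝ) (hH0 : 0 < H0) (hH1 : 0 < H1) (hθ : 0 < θ)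
    (hf : ContDiff ℝ 2 f) (hfstar : IsGLB (Set.range f) fstar)
    (S : Set (EuclideanSpace ℝ (Fin d))) (hSdef : S = {z | f z = fstar})
    (hSne : S.Nonempty)
    (π : EuclideanSpace ℝ (Fin d) → EuclideanSpace ℝ (Fin d))
    (hπ : ∀ z, π z ∈ S ∧ ‖z - π z‖ = Metric.infDist z S)
    (hs : ∀ z, ‖iteratedFDeriv ℝ 2 f z‖ ≤ H0 + H1 * (f z - fstar))
    (haim : ∀ z, θ * (f z - fstar) ≤ ⟪gradient f z, z - π z⟫)
    (w : ℕ → EuclideanSpace ℝ (Fin d)) (η : ℕ → ℝ)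
    (hη : ∀ k, η k = θ / (10 * H0 + 20 * H1 * (f (w k) - fstar)))
    (hstep : ∀ k, w (k + 1) = w k - η k • gradient f (w k)) :
    (∀ k, (Metric.infDist (w (k + 1)) S) ^ 2 ≤
        (Metric.infDist (w k) S) ^ 2 - η k * θ * (f (w k) - fstar)) ∧
    (∀ k, Metric.infDist (w (k + 1)) S ≤ Metric.infDist (w k) S) :=
  stmt_11_general f H0 H1 fstar θ hH0 hH1 hθ hf hfstar S π hπ hs haim w η hη hstep
end

section
/- Iteration complexity of GD with adaptive warm-up under the PL condition: if f is (H0, H1)-smooth and μ-PL, then GD with step size η_k = 1/(10H0 + 20H1(f(w_k)−f*)) achieves f(w_K) − f* ≤ ε after at most K = (40H1/μ)(f(w_0)−f*) + (20H0/μ)·log(H0/(2H1ε)) iterations. Specifically, while f(w_k)−f* ≥ H0/(2H1) the value decreases additively by at least μ/(40H1) per step, and afterwards contracts geometrically by factor (1 − μ/(20H0)) per step. -/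
/-! The descent inequality and the PL condition give, for the gap `g k = f (w k) - f*`, the recursion
`g (k+1) ≤ g k - μ g k / (10 H0 + 20 H1 g k)`. Above `H0 / (2 H1)` the denominator is at most
`40 H1 g k`, below it at most `20 H0`, which gives the two phases. For the iteration count, the
potential `(20 H1 / μ) x + (10 H0 / μ) log (x / ε)` drops by at least one per step while the gap
exceeds `ε`, because `log (x / y) ≥ (x - y) / x`; the inequality `2 log y ≤ y` then bounds its
initial value by the claimed number of iterations. -/

open Real

lemma two_log_le_self {x : ℝ} (hx : 0 < x) : 2 * log x ≤ x := by
  have hs : 0 < √x := sqrt_pos.2 hx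
  have h1 : log √x ≤ √x - 1 := log_le_sub_one_of_pos hs
  have h2 : log √x = log x / 2 := log_sqrt hx.le
  have h3 : √x ^ 2 = x := sq_sqrt hx.le
  nlinarith [sq_nonneg (√x - 2)]

lemma sub_div_le_log_div {x y : ℝ} (hx : 0 < x) (hy : 0 < y) : (x - y) / x ≤ log (x / y) := by
  have h := one_sub_inv_le_log_of_pos (div_pos hx hy)
  rwa [inv_div, one_sub_div hx.ne'] at h

lemma le_sub_div_of_descent_of_pl {μ a a' e D G : ℝ} (hD : 0 ≤ D)
    (hdesc : a' ≤ a - 1 / D / 2 * G ^ 2) (hPL : 2 * μ * e ≤ G ^ 2) : a' ≤ a - μ * e / D := by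
  have : μ * e / D ≤ 1 / D / 2 * G ^ 2 := by
    rw [show μ * e / D = 1 / D / 2 * (2 * μ * e) by ring]
    gcongr
  linarith

lemma log_div_le_div_add_two_mul_log {T ε x : ℝ} (hT : 0 < T) (hε : 0 < ε) (hx : ε ≤ x) :
    log (x / ε) ≤ x / T + 2 * log (T / ε) := by
  have hx0 : 0 < x := hε.trans_le hx
  have hsplit : log (x / ε) = log (x / T) + log (T / ε) := by
    rw [← log_mul (by positivity) (by positivity), div_mul_div_cancel₀ hT.ne']
  have hmono : log (ε / T) ≤ log (x / T) := log_le_log (by positivity) (by gcongr)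
  have hneg : log (ε / T) = -log (T / ε) := by rw [← log_inv, inv_div]
  linarith [two_log_le_self (div_pos hx0 hT)]

section AdaptiveRecursion

variable {H0 H1 μ : ℝ}

lemma warmup_le_decrease (hH0 : 0 < H0) (hH1 : 0 < H1) (hμ : 0 ≤ μ) {x : ℝ}
    (hx : H0 / (2 * H1) ≤ x) : μ / (40 * H1) ≤ μ * x / (10 * H0 + 20 * H1 * x) := by
  have hH : H0 ≤ 2 * H1 * x := by rwa [div_le_iff₀ (by positivity), mul_comm] at hx
  have hxpos : 0 < x := lt_of_lt_of_le (by positivity) hx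
  rw [div_le_div_iff₀ (by positivity) (by positivity)]
  nlinarith [mul_le_mul_of_nonneg_left hH hμ]

lemma geometric_le_decrease (hH0 : 0 < H0) (hH1 : 0 < H1) (hμ : 0 ≤ μ) {x : ℝ}
    (hx0 : 0 ≤ x) (hx : x ≤ H0 / (2 * H1)) :
    μ * x / (20 * H0) ≤ μ * x / (10 * H0 + 20 * H1 * x) := by
  have hH : 2 * H1 * x ≤ H0 := by rwa [le_div_iff₀ (by positivity), mul_comm] at hx
  exact div_le_div_of_nonneg_left (mul_nonneg hμ hx0) (by positivity) (by linarith)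

/-- A Lyapunov function for the recursion: its linear part pays for the warm-up phase and its
logarithmic part for the geometric phase. -/
noncomputable def gdPotential (H0 H1 μ ε x : ℝ) : ℝ :=
  20 * H1 / μ * x + 10 * H0 / μ * log (x / ε)

lemma gdPotential_pos (hH0 : 0 ≤ H0) (hH1 : 0 < H1) (hμ : 0 < μ) {ε x : ℝ} (hε : 0 < ε)
    (hx : ε < x) : 0 < gdPotential H0 H1 μ ε x := by
  have hlog : 0 < log (x / ε) := log_pos ((one_lt_div hε).2 hx)
  unfold gdPotential
  have : 0 < 20 * H1 / μ * x := by have := hε.trans hx; positivity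
  have : 0 ≤ 10 * H0 / μ * log (x / ε) := by positivity
  linarith

lemma gdPotential_add_one_le (hH0 : 0 < H0) (hH1 : 0 ≤ H1) (hμ : 0 < μ) {ε x y : ℝ} (hε : 0 < ε)
    (hx : 0 ≤ x) (hy : ε < y) (hstep : y ≤ x - μ * x / (10 * H0 + 20 * H1 * x)) :
    gdPotential H0 H1 μ ε y + 1 ≤ gdPotential H0 H1 μ ε x := by
  set D := 10 * H0 + 20 * H1 * x
  have hypos : 0 < y := hε.trans hy
  have hxpos : 0 < x := by
    have : 0 ≤ μ * x / D := by positivity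
    linarith
  have hD : 0 < D := by positivity
  have hdec : μ * x ≤ (x - y) * D := by
    rw [← div_le_iff₀ hD]; linarith
  have hlog : log (x / ε) - log (y / ε) = log (x / y) := by
    rw [← log_div (by positivity) (by positivity), div_div_div_cancel_right₀ hε.ne']
  have hgain : 1 ≤ 20 * H1 / μ * (x - y) + 10 * H0 / μ * ((x - y) / x) := by
    have e : 20 * H1 / μ * (x - y) + 10 * H0 / μ * ((x - y) / x) = (x - y) * D / (μ * x) := by
      simp only [D]; field_simp; ring
    rw [e, le_div_iff₀ (by positivity)]
    linarith
  have hlog_ge := mul_le_mul_of_nonneg_left (sub_div_le_log_div hxpos hypos)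
    (by positivity : 0 ≤ 10 * H0 / μ)
  rw [← hlog] at hlog_ge
  unfold gdPotential
  linarith

lemma gdPotential_le (hH0 : 0 < H0) (hH1 : 0 < H1) (hμ : 0 < μ) {ε x : ℝ} (hε : 0 < ε)
    (hx : ε ≤ x) :
    gdPotential H0 H1 μ ε x ≤ 40 * H1 / μ * x + 20 * H0 / μ * log (H0 / (2 * H1 * ε)) := by
  have hT : 0 < H0 / (2 * H1) := by positivity
  calc gdPotential H0 H1 μ ε x
      ≤ 20 * H1 / μ * x + 10 * H0 / μ * (x / (H0 / (2 * H1)) + 2 * log (H0 / (2 * H1) / ε)) := by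
        unfold gdPotential
        gcongr
        exact log_div_le_div_add_two_mul_log hT hε hx
    _ = 40 * H1 / μ * x + 20 * H0 / μ * log (H0 / (2 * H1 * ε)) := by
        rw [div_div]
        field_simp
        ring

lemma antitone_of_adaptive_recursion (hH0 : 0 ≤ H0) (hH1 : 0 ≤ H1) (hμ : 0 ≤ μ) {g : ℕ → ℝ}
    (hg : ∀ k, 0 ≤ g k)
    (hrec : ∀ k, g (k + 1) ≤ g k - μ * g k / (10 * H0 + 20 * H1 * g k)) : Antitone g :=
  antitone_nat_of_succ_le fun k => by
    have : 0 ≤ μ * g k / (10 * H0 + 20 * H1 * g k) := by have := hg k; positivity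
    linarith [hrec k]

theorem le_of_adaptive_recursion (hH0 : 0 < H0) (hH1 : 0 < H1) (hμ : 0 < μ) {ε : ℝ}
    (hε : 0 < ε) {g : ℕ → ℝ} (hg : ∀ k, 0 ≤ g k)
    (hrec : ∀ k, g (k + 1) ≤ g k - μ * g k / (10 * H0 + 20 * H1 * g k)) {K : ℕ}
    (hK : 40 * H1 / μ * g 0 + 20 * H0 / μ * log (H0 / (2 * H1 * ε)) ≤ K) : g K ≤ ε := by
  by_contra! hgK
  have hanti := antitone_of_adaptive_recursion hH0.le hH1.le hμ.le hg hrec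
  have habove : ∀ k ≤ K, ε < g k := fun k hk => hgK.trans_le (hanti hk)
  have hdrop : ∀ k ≤ K, gdPotential H0 H1 μ ε (g k) + k ≤ gdPotential H0 H1 μ ε (g 0) := by
    intro k hk
    induction k with
    | zero => simp
    | succ n ih =>
      have := gdPotential_add_one_le hH0 hH1.le hμ hε (hg n) (habove (n + 1) hk) (hrec n)
      push_cast
      linarith [ih (by omega)]
  have hpos := gdPotential_pos hH0.le hH1 hμ hε hgK
  have hinit := gdPotential_le hH0 hH1 hμ hε (habove 0 K.zero_le).le
  linarith [hdrop K le_rfl]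

end AdaptiveRecursion

theorem stmt_14_general {d : ℕ} (f : EuclideanSpace ℝ (Fin d) → ℝ)
    (H0 H1 fstar μ ε : ℝ) (hH0 : 0 < H0) (hH1 : 0 < H1) (hμ : 0 < μ) (hε : 0 < ε)
    (hfstar : IsGLB (Set.range f) fstar)
    (hPL : ∀ z, 2 * μ * (f z - fstar) ≤ ‖gradient f z‖ ^ 2)
    (w : ℕ → EuclideanSpace ℝ (Fin d)) (η : ℕ → ℝ)
    (hη : ∀ k, η k = 1 / (10 * H0 + 20 * H1 * (f (w k) - fstar)))
    (hdesc : ∀ k, f (w (k + 1)) ≤ f (w k) - (η k / 2) * ‖gradient f (w k)‖ ^ 2) :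
    (∀ k, H0 / (2 * H1) ≤ f (w k) - fstar →
        f (w (k + 1)) ≤ f (w k) - μ / (40 * H1)) ∧
    (∀ k, f (w k) - fstar ≤ H0 / (2 * H1) →
        f (w (k + 1)) - fstar ≤ (1 - μ / (20 * H0)) * (f (w k) - fstar)) ∧
    (∀ K : ℕ,
      (40 * H1 / μ) * (f (w 0) - fstar)
          + (20 * H0 / μ) * Real.log (H0 / (2 * H1 * ε)) ≤ (K : ℝ) →
      f (w K) - fstar ≤ ε) := by
  have hgap : ∀ k, 0 ≤ f (w k) - fstar := fun k => sub_nonneg.2 (hfstar.1 ⟨w k, rfl⟩)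
  have hrec : ∀ k, f (w (k + 1)) - fstar ≤ f (w k) - fstar
      - μ * (f (w k) - fstar) / (10 * H0 + 20 * H1 * (f (w k) - fstar)) := fun k => by
    have := le_sub_div_of_descent_of_pl (by have := hgap k; positivity)
      (hη k ▸ hdesc k) (hPL (w k))
    linarith
  refine ⟨fun k hk => ?_, fun k hk => ?_, fun K hK => ?_⟩
  · linarith [hrec k, warmup_le_decrease hH0 hH1 hμ.le hk]
  · linarith [hrec k, geometric_le_decrease hH0 hH1 hμ.le (hgap k) hk,
      show (1 - μ / (20 * H0)) * (f (w k) - fstar)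
        = f (w k) - fstar - μ * (f (w k) - fstar) / (20 * H0) by ring]
  · exact le_of_adaptive_recursion hH0 hH1 hμ hε hgap hrec hK

/-- Iteration complexity of GD with adaptive warm-up under the PL condition. -/
theorem stmt_14 {d : ℕ} (f : EuclideanSpace ℝ (Fin d) → ℝ)
    (H0 H1 fstar μ ε : ℝ) (hH0 : 0 < H0) (hH1 : 0 < H1) (hμ : 0 < μ) (hε : 0 < ε)
    (hf : ContDiff ℝ 2 f) (hfstar : IsGLB (Set.range f) fstar)
    (hs : ∀ z, ‖iteratedFDeriv ℝ 2 f z‖ ≤ H0 + H1 * (f z - fstar))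
    (hPL : ∀ z, 2 * μ * (f z - fstar) ≤ ‖gradient f z‖ ^ 2)
    (w : ℕ → EuclideanSpace ℝ (Fin d)) (η : ℕ → ℝ)
    (hη : ∀ k, η k = 1 / (10 * H0 + 20 * H1 * (f (w k) - fstar)))
    (hstep : ∀ k, w (k + 1) = w k - η k • gradient f (w k))
    (hdesc : ∀ k, f (w (k + 1)) ≤ f (w k) - (η k / 2) * ‖gradient f (w k)‖ ^ 2) :
    (∀ k, H0 / (2 * H1) ≤ f (w k) - fstar →
        f (w (k + 1)) ≤ f (w k) - μ / (40 * H1)) ∧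
    (∀ k, f (w k) - fstar ≤ H0 / (2 * H1) →
        f (w (k + 1)) - fstar ≤ (1 - μ / (20 * H0)) * (f (w k) - fstar)) ∧
    (∀ K : ℕ,
      (40 * H1 / μ) * (f (w 0) - fstar)
          + (20 * H0 / μ) * Real.log (H0 / (2 * H1 * ε)) ≤ (K : ℝ) →
      f (w K) - fstar ≤ ε) :=
  stmt_14_general f H0 H1 fstar μ ε hH0 hH1 hμ hε hfstar hPL w η hη hdesc
end

section
/- Balancedness trace inequality for deep linear networks: let W_1, …, W_ℓ be matrices (W_i ∈ ℝ^{n_{i−1}×n_i}, n_ℓ = d) that are strongly balanced, i.e. W_iᵀW_i = W_{i+1}W_{i+1}ᵀ for all i ∈ [ℓ−1]. Then Tr(W_ℓᵀ ⋯ W_1ᵀ W_1 ⋯ W_ℓ) = Tr((W_ℓᵀW_ℓ)^ℓ) ≥ ‖W_ℓ‖_F^{2ℓ} / d^{ℓ−1}, and consequently, for any X ∈ ℝ^{d×m}, ‖W_1 ⋯ W_ℓ X‖_F ≥ √(λ_min(XXᵀ)) · ‖W_1‖_F^ℓ / d^{(ℓ−1)/2} (using that strong balancedness implies ‖W_i‖_F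 = ‖W_1‖_F for all i). -/
/-!
Strong balancedness lets one replace `W_iᵀ W_i` by `W_{i+1} W_{i+1}ᵀ` one layer at a time, which
collapses `(W_1 ⋯ W_ℓ)ᵀ (W_1 ⋯ W_ℓ)` to `(W_ℓᵀ W_ℓ)^ℓ` and makes `tr (W_iᵀ W_i)` independent
of `i`. The trace of `(W_ℓᵀ W_ℓ)^ℓ` is the sum of the `ℓ`-th powers of the (nonnegative) eigenvalues, so the
power-mean inequality bounds it below by `tr (W_ℓᵀ W_ℓ)^ℓ / d^(ℓ-1)`. Finally `X Xᵀ ≥ λ_min • 1` in the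
Loewner order, so `tr (S X Xᵀ Sᵀ) ≥ λ_min tr (S Sᵀ)` for `S = W_1 ⋯ W_ℓ`.
-/

open Matrix

/-- The product `W 0 * W 1 * ⋯ * W (k-1)` of a chain of rectangular matrices. -/
def matChainProd (n : ℕ → ℕ)
    (W : (i : ℕ) → Matrix (Fin (n i)) (Fin (n (i + 1))) ℝ) :
    (k : ℕ) → Matrix (Fin (n 0)) (Fin (n k)) ℝ
  | 0 => 1
  | k + 1 => matChainProd n W k * W k

theorem Matrix.mul_pow_mul_eq_mul_mul_pow {a b R : Type*} [Fintype a] [Fintype b]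
    [DecidableEq a] [DecidableEq b] [Semiring R] (B : Matrix a b R) (C : Matrix b a R) (p : ℕ) :
    (B * C) ^ p * B = B * (C * B) ^ p := by
  induction p with
  | zero => simp
  | succ p ih =>
    rw [pow_succ', Matrix.mul_assoc, Matrix.mul_assoc, ih, ← Matrix.mul_assoc C, ← pow_succ']

theorem Matrix.IsHermitian.trace_pow {n 𝕜 : Type*} [Fintype n] [DecidableEq n] [RCLike 𝕜]
    {A : Matrix n n 𝕜} (hA : A.IsHermitian) (k : ℕ) :
    (A ^ k).trace = ∑ i, ((hA.eigenvalues i ^ k : ℝ) : 𝕜) := by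
  conv_lhs => rw [hA.spectral_theorem, ← map_pow, Unitary.conjStarAlgAut_apply, trace_mul_cycle,
    Unitary.coe_star_mul_self, one_mul, diagonal_pow, trace_diagonal]
  simp

open scoped MatrixOrder in
theorem Matrix.IsHermitian.posSemidef_sub_smul_one {n : Type*} [Fintype n] [DecidableEq n]
    {M : Matrix n n ℝ} (hM : M.IsHermitian) {c : ℝ} (hc : ∀ i, c ≤ hM.eigenvalues i) :
    (M - c • 1).PosSemidef := by
  rw [← Algebra.algebraMap_eq_smul_one, ← Matrix.le_iff,
    algebraMap_le_iff_le_spectrum hM.isSelfAdjoint, hM.spectrum_real_eq_range_eigenvalues]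
  rintro _ ⟨i, rfl⟩
  exact hc i

theorem Matrix.PosSemidef.trace_pow_div_card_pow_le {n : Type*} [Fintype n] [DecidableEq n]
    {A : Matrix n n ℝ} (hA : A.PosSemidef) (k : ℕ) :
    A.trace ^ (k + 1) / (Fintype.card n : ℝ) ^ k ≤ (A ^ (k + 1)).trace := by
  rw [hA.1.trace_eq_sum_eigenvalues, hA.1.trace_pow]
  simp only [RCLike.ofReal_real_eq_id, id]
  exact pow_sum_div_card_le_sum_pow (fun i _ => hA.eigenvalues_nonneg i) k

theorem Matrix.IsHermitian.mul_trace_mul_transpose_le {m n : Type*} [Fintype m] [Fintype n]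
    [DecidableEq n] {M : Matrix n n ℝ} (hM : M.IsHermitian) {c : ℝ}
    (hc : ∀ i, c ≤ hM.eigenvalues i) (S : Matrix m n ℝ) :
    c * (S * Sᵀ).trace ≤ (S * M * Sᵀ).trace := by
  have h := ((hM.posSemidef_sub_smul_one hc).mul_mul_conjTranspose_same S).trace_nonneg
  rw [conjTranspose_eq_transpose_of_trivial, Matrix.mul_sub, Matrix.sub_mul, trace_sub,
    Matrix.mul_smul, Matrix.smul_mul, trace_smul, Matrix.mul_one, smul_eq_mul] at h
  linarith

def IsStronglyBalanced (n : ℕ → ℕ) (W : (i : ℕ) → Matrix (Fin (n i)) (Fin (n (i + 1))) ℝ)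
    (ℓ : ℕ) : Prop :=
  ∀ i, i + 1 < ℓ → (W i)ᵀ * W i = W (i + 1) * (W (i + 1))ᵀ

namespace IsStronglyBalanced

variable {n : ℕ → ℕ} {W : (i : ℕ) → Matrix (Fin (n i)) (Fin (n (i + 1))) ℝ} {ℓ : ℕ}

theorem transpose_matChainProd_mul_self (hW : IsStronglyBalanced n W ℓ) {j : ℕ} (hj : j < ℓ) :
    (matChainProd n W (j + 1))ᵀ * matChainProd n W (j + 1) = ((W j)ᵀ * W j) ^ (j + 1) := by
  induction j with
  | zero => simp [matChainProd]
  | succ j ih =>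
    rw [matChainProd, transpose_mul, Matrix.mul_assoc, ← Matrix.mul_assoc (matChainProd n W _)ᵀ,
      ih (by omega), hW j hj, mul_pow_mul_eq_mul_mul_pow, ← Matrix.mul_assoc, ← pow_succ']

theorem trace_transpose_mul_self_eq (hW : IsStronglyBalanced n W ℓ) {j : ℕ} (hj : j < ℓ) :
    ((W j)ᵀ * W j).trace = ((W 0)ᵀ * W 0).trace := by
  induction j with
  | zero => rfl
  | succ j ih => rw [← ih (by omega), trace_mul_comm, ← hW j hj]

end IsStronglyBalanced

/-- Here `W i` is the paper's `W_{i+1}`, so `W (ℓ - 1)` is the last layer `W_ℓ`. -/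
theorem stmt_19_general (ℓ d : ℕ) (hℓ : 0 < ℓ)
    (n : ℕ → ℕ) (hn : n ℓ = d)
    (W : (i : ℕ) → Matrix (Fin (n i)) (Fin (n (i + 1))) ℝ)
    (hbal : ∀ i, i + 1 < ℓ → (W i)ᵀ * W i = W (i + 1) * (W (i + 1))ᵀ)
    {m : ℕ} (X : Matrix (Fin (n ℓ)) (Fin m) ℝ)
    (hX : (X * Xᵀ).IsHermitian)
    (lamin : ℝ) (hlam : lamin = ⨅ i, hX.eigenvalues i) :
    ((matChainProd n W ℓ)ᵀ * matChainProd n W ℓ).trace =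
        (((W (ℓ - 1))ᵀ * W (ℓ - 1)) ^ ℓ).trace ∧
    (((W (ℓ - 1))ᵀ * W (ℓ - 1)).trace) ^ ℓ / (d : ℝ) ^ (ℓ - 1) ≤
        (((W (ℓ - 1))ᵀ * W (ℓ - 1)) ^ ℓ).trace ∧
    Real.sqrt lamin * (Real.sqrt (((W 0)ᵀ * W 0).trace)) ^ ℓ
        / (d : ℝ) ^ (((ℓ : ℝ) - 1) / 2) ≤
      Real.sqrt (((matChainProd n W ℓ * X)ᵀ * (matChainProd n W ℓ * X)).trace) := by
  subst hn
  obtain ⟨k, rfl⟩ : ∃ k, ℓ = k + 1 := Nat.exists_eq_add_one.mpr hℓ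
  have hW : IsStronglyBalanced n W (k + 1) := hbal
  set P := matChainProd n W (k + 1)
  set T := ((W 0)ᵀ * W 0).trace
  have hPP : Pᵀ * P = ((W k)ᵀ * W k) ^ (k + 1) := hW.transpose_matChainProd_mul_self k.lt_add_one
  have hpow : ((W k)ᵀ * W k).trace ^ (k + 1) / (n (k + 1) : ℝ) ^ k ≤
      (((W k)ᵀ * W k) ^ (k + 1)).trace := by
    simpa using (posSemidef_conjTranspose_mul_self (W k)).trace_pow_div_card_pow_le k
  have hlam_le : ∀ i, lamin ≤ hX.eigenvalues i := fun i =>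
    hlam ▸ ciInf_le (Set.finite_range _).bddBelow i
  have hlam_nonneg : 0 ≤ lamin :=
    hlam ▸ Real.iInf_nonneg fun i => (posSemidef_self_mul_conjTranspose X).eigenvalues_nonneg i
  have hTk : ((W k)ᵀ * W k).trace = T := hW.trace_transpose_mul_self_eq k.lt_add_one
  have hT : 0 ≤ T := (posSemidef_conjTranspose_mul_self (W 0)).trace_nonneg
  refine ⟨congrArg trace hPP, hpow, ?_⟩
  have hPX : 0 ≤ ((P * X)ᵀ * (P * X)).trace :=
    (posSemidef_conjTranspose_mul_self (P * X)).trace_nonneg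
  rw [Real.le_sqrt (by positivity) hPX]
  calc (√lamin * √T ^ (k + 1) / (n (k + 1) : ℝ) ^ (((k + 1 : ℕ) - 1 : ℝ) / 2)) ^ 2
      = lamin * (T ^ (k + 1) / (n (k + 1) : ℝ) ^ k) := by
        rw [Nat.cast_add_one, add_sub_cancel_right, Real.rpow_div_two_eq_sqrt _ (by positivity),
          Real.rpow_natCast, div_pow, mul_pow, ← pow_mul, ← pow_mul, mul_comm (k + 1), mul_comm k,
          pow_mul, pow_mul, Real.sq_sqrt hlam_nonneg, Real.sq_sqrt hT, Real.sq_sqrt (by positivity),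
          mul_div_assoc]
    _ ≤ lamin * (P * Pᵀ).trace := by
        rw [trace_mul_comm, hPP, ← hTk]
        gcongr
    _ ≤ (P * (X * Xᵀ) * Pᵀ).trace := hX.mul_trace_mul_transpose_le hlam_le P
    _ = ((P * X)ᵀ * (P * X)).trace := by
        rw [trace_mul_comm (P * X)ᵀ, transpose_mul]
        simp only [Matrix.mul_assoc]

/-- Balancedness trace inequality for deep linear networks.  Here `W i` plays the role of
`W_{i+1}` in the paper (so `W (ℓ-1)` is the last layer `W_ℓ`), Frobenius norms are written
as `√(tr (AᵀA))`, and `lamin` is the smallest eigenvalue of `X * Xᵀ`. -/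
theorem stmt_19 (ℓ d : ℕ) (hℓ : 0 < ℓ) (hd : 0 < d)
    (n : ℕ → ℕ) (hn : n ℓ = d)
    (W : (i : ℕ) → Matrix (Fin (n i)) (Fin (n (i + 1))) ℝ)
    (hbal : ∀ i, i + 1 < ℓ → (W i)ᵀ * W i = W (i + 1) * (W (i + 1))ᵀ)
    {m : ℕ} (X : Matrix (Fin (n ℓ)) (Fin m) ℝ)
    (hX : (X * Xᵀ).IsHermitian)
    (lamin : ℝ) (hlam : lamin = ⨅ i, hX.eigenvalues i) :
    ((matChainProd n W ℓ)ᵀ * matChainProd n W ℓ).trace =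
        (((W (ℓ - 1))ᵀ * W (ℓ - 1)) ^ ℓ).trace ∧
    (((W (ℓ - 1))ᵀ * W (ℓ - 1)).trace) ^ ℓ / (d : ℝ) ^ (ℓ - 1) ≤
        (((W (ℓ - 1))ᵀ * W (ℓ - 1)) ^ ℓ).trace ∧
    Real.sqrt lamin * (Real.sqrt (((W 0)ᵀ * W 0).trace)) ^ ℓ
        / (d : ℝ) ^ (((ℓ : ℝ) - 1) / 2) ≤
      Real.sqrt (((matChainProd n W ℓ * X)ᵀ * (matChainProd n W ℓ * X)).trace) :=
  stmt_19_general ℓ d hℓ n hn W hbal X hX lamin hlam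
end
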